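/- arXiv:2605.19894 — 11 statements merged into one kernel-verified Lean document; each statement's English description precedes it below -/
import Mathlib

section
/- For every σ > 1, the function χ ↦ R(χ,σ) attains a global minimum over the set [-1,∞)^L at some point χ* lying in the open cube (-1,0)^L; that is, there exists χ* with -1 < χ*_l < 0 for every l and R(χ*,σ) ≤ R(χ,σ) for all χ ∈ [-1,∞)^L. -/
open Matrix

/-- The matrix `C(χ) = σ B⁻¹ + Diag(λ ⊙ (χ + 𝟙))`. -/
noncomputable def Cmat {L : ℕ} (σ : ℝ) (lam : Fin L → ℝ) (B : Matrix (Fin L) (Fin L) ℝ)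
    (χ : Fin L → ℝ) : Matrix (Fin L) (Fin L) ℝ :=
  σ • B⁻¹ + Matrix.diagonal (fun l => lam l * (χ l + 1))

/-- The replica-symmetric objective
`R(χ,σ) = log det(σ B⁻¹ + Diag(λ ⊙ (χ+𝟙))) + (1/2) ∑ λ_l χ_l²`. -/
noncomputable def Rfun {L : ℕ} (σ : ℝ) (lam : Fin L → ℝ) (B : Matrix (Fin L) (Fin L) ℝ)
    (χ : Fin L → ℝ) : ℝ :=
  Real.log (Cmat σ lam B χ).det + (1 / 2) * ∑ l, lam l * χ l ^ 2

/-!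
Along a coordinate direction `χ_l ↦ t` the matrix `C(χ)` changes by a diagonal rank-one term,
so `det C` is affine in `t` and `log det C` lies below its tangent line, of slope
`λ_l (C⁻¹)_{ll}`. With `p_l = (C(χ)⁻¹)_{ll}` this gives
`R(χ[l ↦ t]) ≤ R(χ) + (λ_l / 2) ((t + p_l)² - (χ_l + p_l)²)`.
Since `C ≥ σ B⁻¹` in the Loewner order, `0 < p_l ≤ σ⁻¹ B_{ll} = σ⁻¹ < 1`.
Hence lowering positive coordinates to `0` never increases `R`, so it suffices to minimise over
the compact cube `[-1, 0]^L`; and at a minimiser there, moving `χ_l` to `-p_l ∈ (-1, 0)` would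
strictly decrease `R` unless `χ_l = -p_l` already.
-/

namespace Matrix

variable {n : Type*} [Fintype n] [DecidableEq n]

theorem det_add_diagonal_single {K : Type*} [Field K] {A : Matrix n n K} (hA : A.det ≠ 0)
    (l : n) (s : K) :
    (A + diagonal (Pi.single l s)).det = A.det * (1 + s * A⁻¹ l l) := by
  have hrow : A + diagonal (Pi.single l s) = A.updateRow l (A l + s • Pi.single l 1) := by
    ext i j
    rcases eq_or_ne i l with rfl | hi
    · rcases eq_or_ne j i with rfl | hj
      · simp
      · simp [hj, hj.symm]
    · simp [diagonal_apply, hi]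
  rw [hrow, det_updateRow_add, det_updateRow_smul, updateRow_eq_self, ← adjugate_apply,
    inv_def, smul_apply, Ring.inverse_eq_inv', smul_eq_mul]
  field_simp

theorem PosDef.two_mul_dotProduct_sub_le {A : Matrix n n ℝ} (hA : A.PosDef) (x y : n → ℝ) :
    2 * (x ⬝ᵥ y) - x ⬝ᵥ (A *ᵥ x) ≤ y ⬝ᵥ (A⁻¹ *ᵥ y) := by
  have hsymm : Aᵀ = A := by simpa using hA.isHermitian.eq
  have hAA : A *ᵥ (A⁻¹ *ᵥ y) = y := by
    rw [mulVec_mulVec, mul_nonsing_inv _ hA.det_pos.ne'.isUnit, one_mulVec]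
  -- complete the square
  have hsq := hA.posSemidef.dotProduct_mulVec_nonneg (x - A⁻¹ *ᵥ y)
  have hcross : A⁻¹ *ᵥ y ⬝ᵥ (A *ᵥ x) = x ⬝ᵥ y := by
    rw [← hsymm, dotProduct_transpose_mulVec, hsymm, hAA]
  simp only [star_trivial, mulVec_sub, hAA, dotProduct_sub, sub_dotProduct, hcross] at hsq
  rw [dotProduct_comm (A⁻¹ *ᵥ y)] at hsq
  linarith

theorem PosDef.inv_add_apply_self_le {A D : Matrix n n ℝ} (hA : A.PosDef) (hD : D.PosSemidef)
    (l : n) : (A + D)⁻¹ l l ≤ A⁻¹ l l := by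
  have hAD : (A + D).PosDef := hA.add_posSemidef hD
  set y := (A + D)⁻¹ *ᵥ Pi.single l 1
  have hy : (A + D) *ᵥ y = Pi.single l 1 := by
    rw [mulVec_mulVec, mul_nonsing_inv _ hAD.det_pos.ne'.isUnit, one_mulVec]
  have hyl : y l = (A + D)⁻¹ l l := by simp [y, mulVec_single]
  have hquad : y ⬝ᵥ (A *ᵥ y) ≤ y l := by
    have := hD.dotProduct_mulVec_nonneg y
    have h2 : y ⬝ᵥ ((A + D) *ᵥ y) = y l := by rw [hy, dotProduct_single, mul_one]
    simp only [add_mulVec, dotProduct_add, star_trivial] at h2 this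
    linarith
  have key := hA.two_mul_dotProduct_sub_le y (Pi.single l 1)
  simp only [dotProduct_single, mul_one, mulVec_single, single_dotProduct, one_mul, col_apply,
    MulOpposite.op_one, one_smul] at key
  linarith

theorem PosDef.log_det_add_diagonal_single_le {A : Matrix n n ℝ} (hA : A.PosDef) {l : n}
    {s : ℝ} (hA' : (A + diagonal (Pi.single l s)).PosDef) :
    Real.log (A + diagonal (Pi.single l s)).det ≤ Real.log A.det + s * A⁻¹ l l := by
  have hpos := hA'.det_pos
  rw [det_add_diagonal_single hA.det_pos.ne'] at hpos ⊢
  have hfactor : 0 < 1 + s * A⁻¹ l l := pos_of_mul_pos_right hpos hA.det_pos.le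
  rw [Real.log_mul hA.det_pos.ne' hfactor.ne']
  linarith [Real.log_le_sub_one_of_pos hfactor]

end Matrix

theorem Fintype.sum_mul_update_sq {ι : Type*} [Fintype ι] [DecidableEq ι] (w x : ι → ℝ) (l : ι)
    (t : ℝ) :
    ∑ k, w k * Function.update x l t k ^ 2 = ∑ k, w k * x k ^ 2 + w l * (t ^ 2 - x l ^ 2) := by
  have hupd : (fun k => w k * Function.update x l t k ^ 2)
      = Function.update (fun k => w k * x k ^ 2) l (w l * t ^ 2) := by
    ext k
    rcases eq_or_ne k l with rfl | hk <;> simp [*]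
  rw [hupd, Finset.sum_update_of_mem (Finset.mem_univ l),
    Finset.sum_eq_add_sum_sdiff_singleton_of_mem (Finset.mem_univ l)]
  ring

section

variable {L : ℕ} {σ : ℝ} {lam : Fin L → ℝ} {B : Matrix (Fin L) (Fin L) ℝ} {χ : Fin L → ℝ}

theorem Cmat_update (χ : Fin L → ℝ) (l : Fin L) (t : ℝ) :
    Cmat σ lam B (Function.update χ l t)
      = Cmat σ lam B χ + diagonal (Pi.single l (lam l * (t - χ l))) := by
  rw [Cmat, Cmat, add_assoc, diagonal_add]
  congr 2
  ext k
  rcases eq_or_ne k l with rfl | hk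
  · simp; ring
  · simp [hk]

theorem posSemidef_diagonal_lam_mul (hlam : ∀ l, 0 < lam l) (hχ : ∀ l, -1 ≤ χ l) :
    (diagonal fun l => lam l * (χ l + 1)).PosSemidef :=
  PosSemidef.diagonal fun l => mul_nonneg (hlam l).le (by linarith [hχ l])

theorem Cmat_posDef (hB : B.PosDef) (hσ : 0 < σ) (hlam : ∀ l, 0 < lam l)
    (hχ : ∀ l, -1 ≤ χ l) : (Cmat σ lam B χ).PosDef :=
  (hB.inv.smul hσ).add_posSemidef (posSemidef_diagonal_lam_mul hlam hχ)

theorem inv_Cmat_apply_self_le (hB : B.PosDef) (hBdiag : ∀ l, B l l = 1) (hσ : 0 < σ)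
    (hlam : ∀ l, 0 < lam l) (hχ : ∀ l, -1 ≤ χ l) (l : Fin L) :
    (Cmat σ lam B χ)⁻¹ l l ≤ σ⁻¹ := by
  have hinv : (σ • B⁻¹)⁻¹ = σ⁻¹ • B := by
    refine inv_eq_left_inv ?_
    rw [smul_mul_smul_comm, inv_mul_cancel₀ hσ.ne', mul_nonsing_inv _ hB.det_pos.ne'.isUnit,
      one_smul]
  have h := (hB.inv.smul hσ).inv_add_apply_self_le (posSemidef_diagonal_lam_mul hlam hχ) l
  rwa [hinv, Matrix.smul_apply, hBdiag, smul_eq_mul, mul_one] at h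

theorem inv_Cmat_apply_self_mem_Ioo (hB : B.PosDef) (hBdiag : ∀ l, B l l = 1) (hσ : 1 < σ)
    (hlam : ∀ l, 0 < lam l) (hχ : ∀ l, -1 ≤ χ l) (l : Fin L) :
    (Cmat σ lam B χ)⁻¹ l l ∈ Set.Ioo 0 1 :=
  have hσ0 : 0 < σ := one_pos.trans hσ
  ⟨(Cmat_posDef hB hσ0 hlam hχ).inv.diag_pos,
    (inv_Cmat_apply_self_le hB hBdiag hσ0 hlam hχ l).trans_lt (inv_lt_one_of_one_lt₀ hσ)⟩

theorem Rfun_update_le (hB : B.PosDef) (hσ : 0 < σ) (hlam : ∀ l, 0 < lam l)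
    (hχ : ∀ k, -1 ≤ χ k) (l : Fin L) {t : ℝ} (ht : -1 ≤ t) :
    Rfun σ lam B (Function.update χ l t) ≤ Rfun σ lam B χ
      + lam l / 2 * ((t + (Cmat σ lam B χ)⁻¹ l l) ^ 2
        - (χ l + (Cmat σ lam B χ)⁻¹ l l) ^ 2) := by
  have hχ' : ∀ k, -1 ≤ Function.update χ l t k :=
    le_update_iff (x := fun _ => -1) |>.2 ⟨ht, fun k _ => hχ k⟩
  have hC' := Cmat_posDef hB hσ hlam hχ'
  rw [Cmat_update] at hC'
  have hlog := (Cmat_posDef hB hσ hlam hχ).log_det_add_diagonal_single_le hC'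
  rw [Rfun, Rfun, Cmat_update, Fintype.sum_mul_update_sq]
  linear_combination hlog

theorem Rfun_min_zero_le (hB : B.PosDef) (hσ : 0 < σ) (hlam : ∀ l, 0 < lam l)
    (hχ : ∀ k, -1 ≤ χ k) :
    Rfun σ lam B (fun k => min (χ k) 0) ≤ Rfun σ lam B χ := by
  suffices ∀ s : Finset (Fin L),
      Rfun σ lam B (fun k => if k ∈ s then min (χ k) 0 else χ k) ≤ Rfun σ lam B χ by
    simpa using this Finset.univ
  intro s
  induction s using Finset.induction_on with
  | empty => simp
  | @insert a s ha ih =>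
    set F : Fin L → ℝ := fun k => if k ∈ s then min (χ k) 0 else χ k
    have hF : ∀ k, -1 ≤ F k := fun k => by
      unfold F; split_ifs
      exacts [le_min (hχ k) (by norm_num), hχ k]
    have hinsert : (fun k => if k ∈ insert a s then min (χ k) 0 else χ k)
        = Function.update F a (min (χ a) 0) := by
      ext k
      rcases eq_or_ne k a with rfl | hk <;> simp [F, *]
    have hFa : F a = χ a := by simp [F, ha]
    have hp := (Cmat_posDef hB hσ hlam hF).inv.diag_pos (i := a)
    have hstep :=
      Rfun_update_le hB hσ hlam hF a (t := min (χ a) 0) (le_min (hχ a) (by norm_num))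
    rw [hinsert]
    refine hstep.trans (le_trans ?_ ih)
    rw [hFa]
    have hsq : (min (χ a) 0 + (Cmat σ lam B F)⁻¹ a a) ^ 2
        ≤ (χ a + (Cmat σ lam B F)⁻¹ a a) ^ 2 := by
      rcases le_total (χ a) 0 with h | h
      · rw [min_eq_left h]
      · rw [min_eq_right h]; nlinarith
    nlinarith [hlam a]

theorem continuousOn_Rfun (hB : B.PosDef) (hσ : 0 < σ) (hlam : ∀ l, 0 < lam l) :
    ContinuousOn (Rfun σ lam B) {χ | ∀ l, -1 ≤ χ l} := by
  have hdet : Continuous fun χ => (Cmat σ lam B χ).det :=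
    (continuous_const.add (continuous_pi fun l => continuous_const.mul
      ((continuous_apply l).add continuous_const)).matrix_diagonal).matrix_det
  refine ContinuousOn.add (fun χ hχ => ?_) (by fun_prop)
  exact (hdet.continuousAt.log (Cmat_posDef hB hσ hlam hχ).det_pos.ne').continuousWithinAt

theorem eq_neg_inv_Cmat_apply_self_of_isMinOn (hB : B.PosDef) (hBdiag : ∀ l, B l l = 1)
    (hσ : 1 < σ) (hlam : ∀ l, 0 < lam l) (hχ : χ ∈ Set.Icc (-1) 0)
    (hmin : IsMinOn (Rfun σ lam B) (Set.Icc (-1) 0) χ) (l : Fin L) :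
    χ l = -(Cmat σ lam B χ)⁻¹ l l := by
  set p := (Cmat σ lam B χ)⁻¹ l l
  obtain ⟨hp0, hp1⟩ : p ∈ Set.Ioo 0 1 := inv_Cmat_apply_self_mem_Ioo hB hBdiag hσ hlam hχ.1 l
  have hmem : Function.update χ l (-p) ∈ Set.Icc (-1) 0 :=
    ⟨le_update_iff.2 ⟨by simp; linarith, fun j _ => hχ.1 j⟩,
      update_le_iff.2 ⟨by simp; linarith, fun j _ => hχ.2 j⟩⟩
  have hstep : Rfun σ lam B (Function.update χ l (-p))
      ≤ Rfun σ lam B χ + lam l / 2 * ((-p + p) ^ 2 - (χ l + p) ^ 2) :=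
    Rfun_update_le hB (one_pos.trans hσ) hlam hχ.1 l (by linarith)
  have hle : Rfun σ lam B χ ≤ Rfun σ lam B (Function.update χ l (-p)) := hmin hmem
  have hdecrease : lam l * (χ l + p) ^ 2 ≤ lam l * 0 := by linarith
  have hsq := le_of_mul_le_mul_left hdecrease (hlam l)
  linarith [pow_eq_zero_iff two_ne_zero |>.1 (hsq.antisymm (sq_nonneg _))]

end

theorem stmt2_general {L : ℕ} (lam : Fin L → ℝ) (hlam : ∀ l, 0 < lam l)
    (B : Matrix (Fin L) (Fin L) ℝ) (hB : B.PosDef) (hBdiag : ∀ l, B l l = 1)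
    (σ : ℝ) (hσ : 1 < σ) :
    ∃ χs : Fin L → ℝ, (∀ l, -1 < χs l ∧ χs l < 0) ∧
      ∀ χ : Fin L → ℝ, (∀ l, -1 ≤ χ l) → Rfun σ lam B χs ≤ Rfun σ lam B χ := by
  have hσ0 : 0 < σ := one_pos.trans hσ
  obtain ⟨χs, hχs, hmin⟩ := (isCompact_Icc (a := (-1 : Fin L → ℝ)) (b := 0)).exists_isMinOn
    (Set.nonempty_Icc.2 (neg_nonpos.2 zero_le_one))
    ((continuousOn_Rfun hB hσ0 hlam).mono fun χ hχ => hχ.1)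
  refine ⟨χs, fun l => ?_, fun χ hχ => ?_⟩
  · obtain ⟨hp0, hp1⟩ := inv_Cmat_apply_self_mem_Ioo hB hBdiag hσ hlam hχs.1 l
    rw [eq_neg_inv_Cmat_apply_self_of_isMinOn hB hBdiag hσ hlam hχs hmin l]
    constructor <;> linarith
  · have hclamp : (fun k => min (χ k) 0) ∈ Set.Icc (-1) 0 :=
      ⟨fun k => le_min (hχ k) (by norm_num), fun k => min_le_right _ _⟩
    exact (hmin hclamp).trans (Rfun_min_zero_le hB hσ0 hlam hχ)

/-- for every `σ > 1`, the function `χ ↦ R(χ,σ)` attains a global minimum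
over `[-1,∞)^L` at some point of the open cube `(-1,0)^L`. -/
theorem stmt2 {L : ℕ} (hL : 0 < L) (lam : Fin L → ℝ) (hlam : ∀ l, 0 < lam l)
    (B : Matrix (Fin L) (Fin L) ℝ) (hB : B.PosDef) (hBdiag : ∀ l, B l l = 1)
    (σ : ℝ) (hσ : 1 < σ) :
    ∃ χs : Fin L → ℝ, (∀ l, -1 < χs l ∧ χs l < 0) ∧
      ∀ χ : Fin L → ℝ, (∀ l, -1 ≤ χ l) → Rfun σ lam B χs ≤ Rfun σ lam B χ :=
  stmt2_general lam hlam B hB hBdiag σ hσ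
end

section
/- Let σ ≥ 1 and let χ* ∈ (-1,0)^L be a local minimizer of χ ↦ R(χ,σ) at which the gradient of R(·,σ) vanishes. Set M* := (σB^{-1} + Diag(λ⊙(χ*+𝟙_L)))^{-1}. Then the Hessian of R(·,σ) at χ*, namely Λ − Λ(M*⊙M*)Λ, is positive definite (not merely positive semidefinite). -/
/-!
Write `C = Cmat σ lam B χ*`, `M = C⁻¹ = R⁻¹ R⁻¹` with `R` self-adjoint, and for a direction `x`
let `E = Diag(λ ⊙ x)` and `μ` be the eigenvalues of `R⁻¹ E R⁻¹`. Then
`det (C + t E) = det C · ∏ (1 + t μᵢ)` and `xᵀ Λ (M ⊙ M) Λ x = tr (E M E M) = ∑ μᵢ²`, so the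
Hessian form at `x` is `∑ λₗ xₗ² - ∑ μᵢ²`. Along the line `χ* + t x`, local minimality gives
`R(χ* + t x) + R(χ* - t x) - 2 R(χ*) = ∑ log (1 - t² μᵢ²) + t² ∑ λₗ xₗ² ≥ 0` for small `t`,
and since `log (1 - s) < -s` for `s ≠ 0`, this forces `∑ μᵢ² < ∑ λₗ xₗ²` unless `μ = 0`.
Strict definiteness thus comes from the negative fourth-order term of the log-determinant.
-/

open Matrix

open Filter Topology Real

namespace Matrix

variable {n : Type*} [Fintype n] [DecidableEq n]

theorem dotProduct_mulVec_diagonal_hadamard_diagonal (A B : Matrix n n ℝ) (d x : n → ℝ) :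
    x ⬝ᵥ ((diagonal d * (A ⊙ B) * diagonal d) *ᵥ x) =
      (diagonal (d * x) * A * diagonal (d * x) * Bᵀ).trace := by
  have hv : x ᵥ* diagonal d = d * x := funext fun i => by simp [vecMul_diagonal, mul_comm]
  have hw : diagonal d *ᵥ x = d * x := funext fun i => by simp [mulVec_diagonal]
  rw [dotProduct_mulVec, ← vecMul_vecMul, ← vecMul_vecMul, ← dotProduct_mulVec, hv, hw,
    dotProduct_vecMul_hadamard, transpose_mul, diagonal_transpose]
  simp only [mul_assoc]

theorem IsHermitian.det_one_add_smul {S : Matrix n n ℝ} (hS : S.IsHermitian) (t : ℝ) :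
    (1 + t • S).det = ∏ i, (1 + t * hS.eigenvalues i) := by
  have hconj : 1 + t • S = Unitary.conjStarAlgAut ℝ _ hS.eigenvectorUnitary
      (diagonal fun i => 1 + t * hS.eigenvalues i) := by
    conv_lhs => rw [hS.spectral_theorem]
    rw [← map_one (Unitary.conjStarAlgAut ℝ _ hS.eigenvectorUnitary), ← map_smul, ← map_add]
    congr 1
    ext i j
    rcases eq_or_ne i j with rfl | hij <;> simp [*]
  rw [hconj, Unitary.conjStarAlgAut_apply,
    det_conj_of_mul_eq_one (Unitary.coe_mul_star_self _) (Unitary.coe_star_mul_self _),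
    det_diagonal]

theorem IsHermitian.trace_mul_self {S : Matrix n n ℝ} (hS : S.IsHermitian) :
    (S * S).trace = ∑ i, hS.eigenvalues i ^ 2 := by
  conv_lhs => rw [hS.spectral_theorem, ← map_mul, Unitary.conjStarAlgAut_apply, trace_mul_cycle,
    Unitary.coe_star_mul_self, one_mul, diagonal_mul_diagonal, trace_diagonal]
  simp [sq]

open scoped MatrixOrder in
theorem PosDef.exists_det_add_smul_eq_mul_prod {C E : Matrix n n ℝ} (hC : C.PosDef)
    (hE : E.IsHermitian) :
    ∃ μ : n → ℝ, (∀ t : ℝ, (C + t • E).det = C.det * ∏ i, (1 + t * μ i)) ∧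
      ∑ i, μ i ^ 2 = (E * C⁻¹ * E * C⁻¹).trace := by
  obtain ⟨R, hR, hRsa, rfl⟩ :=
    CStarAlgebra.isStrictlyPositive_iff_exists_isUnit_and_isSelfAdjoint_and_eq_mul_self.mp
      hC.isStrictlyPositive
  have hRdet : IsUnit R.det := (isUnit_iff_isUnit_det R).mp hR
  have hS : (R⁻¹ * E * R⁻¹).IsHermitian := by
    have hRinv : (R⁻¹)ᴴ = R⁻¹ := by
      rw [conjTranspose_nonsing_inv, ← star_eq_conjTranspose, hRsa.star_eq]
    simp only [IsHermitian, conjTranspose_mul, hRinv, hE.eq, mul_assoc]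
  refine ⟨hS.eigenvalues, fun t => ?_, ?_⟩
  · have : R * R + t • E = R * (1 + t • (R⁻¹ * E * R⁻¹)) * R := by
      simp [mul_add, add_mul, mul_assoc, mul_nonsing_inv_cancel_left _ _ hRdet,
        nonsing_inv_mul_cancel_right _ _ hRdet]
    rw [this, det_mul, det_mul, hS.det_one_add_smul, det_mul]
    ring
  · rw [← hS.trace_mul_self, mul_inv_rev]
    simp only [mul_assoc]
    rw [trace_mul_comm R⁻¹]
    simp only [mul_assoc]

end Matrix

theorem sum_sq_lt_of_isLocalMin_log_prod {ι : Type*} [Fintype ι] {μ : ι → ℝ} {c b a q : ℝ}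
    (hc : 0 < c) (hq : 0 < q)
    (hmin : IsLocalMin (fun t => log (c * ∏ i, (1 + t * μ i)) + (b + a * t + q / 2 * t ^ 2)) 0) :
    ∑ i, μ i ^ 2 < q := by
  rcases eq_or_ne μ 0 with rfl | hμ
  · simpa using hq
  obtain ⟨i₀, hi₀⟩ := Function.ne_iff.mp hμ
  set f := fun t => log (c * ∏ i, (1 + t * μ i)) + (b + a * t + q / 2 * t ^ 2)
  have hsmall : ∀ᶠ t in 𝓝 (0 : ℝ), ∀ i, (t * μ i) ^ 2 < 1 :=
    eventually_all.2 fun i => ContinuousAt.eventually_lt (by fun_prop) continuousAt_const (by simp)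
  have hneg : ∀ᶠ t in 𝓝 (0 : ℝ), f 0 ≤ f (-t) :=
    (continuous_neg.tendsto' 0 0 neg_zero).eventually hmin
  obtain ⟨t, ⟨hle, hle', hsm⟩, ht : t ≠ 0⟩ :=
    (((hmin.and (hneg.and hsmall)).filter_mono nhdsWithin_le_nhds).and
      (self_mem_nhdsWithin (s := {(0 : ℝ)}ᶜ))).exists
  have hfac : ∀ i, 0 < 1 - (t * μ i) ^ 2 := fun i => sub_pos.2 (hsm i)
  have hP : ∀ s : ℝ, (∀ i, (s * μ i) ^ 2 < 1) → ∏ i, (1 + s * μ i) ≠ 0 :=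
    fun s hs => Finset.prod_ne_zero_iff.2 fun i _ h => by nlinarith [hs i]
  have hf : ∀ s : ℝ, (∀ i, (s * μ i) ^ 2 < 1) →
      f s = log c + log (∏ i, (1 + s * μ i)) + (b + a * s + q / 2 * s ^ 2) :=
    fun s hs => by rw [← log_mul hc.ne' (hP s hs)]
  have hprod : (∏ i, (1 + t * μ i)) * ∏ i, (1 + -t * μ i) = ∏ i, (1 - (t * μ i) ^ 2) := by
    rw [← Finset.prod_mul_distrib]
    exact Finset.prod_congr rfl fun i _ => by ring
  have hsum : f t + f (-t) - 2 * f 0 = ∑ i, log (1 - (t * μ i) ^ 2) + q * t ^ 2 := by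
    have hsm' : ∀ i, (-t * μ i) ^ 2 < 1 := by simpa using hsm
    have hf0 : f 0 = log c + b := by simp [f]
    rw [hf t hsm, hf (-t) hsm', hf0, ← log_prod fun i _ => (hfac i).ne', ← hprod,
      log_mul (hP t hsm) (hP (-t) hsm')]
    ring
  have hlog : ∑ i, log (1 - (t * μ i) ^ 2) < ∑ i, -(t * μ i) ^ 2 := by
    refine Finset.sum_lt_sum (fun i _ => (log_le_sub_one_of_pos (hfac i)).trans_eq (by ring))
      ⟨i₀, Finset.mem_univ _, (log_lt_sub_one_of_pos (hfac i₀) ?_).trans_eq (by ring)⟩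
    simpa [ht] using hi₀
  have hsq : ∑ i, -(t * μ i) ^ 2 = -(t ^ 2 * ∑ i, μ i ^ 2) := by
    simp only [mul_pow, Finset.sum_neg_distrib, Finset.mul_sum]
  have hpos : 0 < t ^ 2 * (q - ∑ i, μ i ^ 2) := by linarith
  exact sub_pos.1 (pos_of_mul_pos_right hpos (sq_nonneg t))

section ReplicaSymmetric

variable {L : ℕ} {σ : ℝ} {lam : Fin L → ℝ} {B : Matrix (Fin L) (Fin L) ℝ}

theorem cmat_posDef {χ : Fin L → ℝ} (hσ : 0 < σ) (hB : B.PosDef)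
    (hχ : ∀ l, 0 ≤ lam l * (χ l + 1)) : (Cmat σ lam B χ).PosDef :=
  (hB.inv.smul hσ).add_posSemidef (.diagonal hχ)

theorem cmat_add_smul (χ x : Fin L → ℝ) (t : ℝ) :
    Cmat σ lam B (χ + t • x) = Cmat σ lam B χ + t • diagonal (lam * x) := by
  simp only [Cmat, add_assoc, ← diagonal_smul, diagonal_add]
  congr 3
  funext l
  simp only [Pi.add_apply, Pi.smul_apply, Pi.mul_apply, smul_eq_mul]
  ring

theorem rfun_add_smul (χ x : Fin L → ℝ) (t : ℝ) :
    Rfun σ lam B (χ + t • x) = log (Cmat σ lam B χ + t • diagonal (lam * x)).det +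
      ((1 / 2) * ∑ l, lam l * χ l ^ 2 + (∑ l, lam l * χ l * x l) * t +
        (∑ l, lam l * x l ^ 2) / 2 * t ^ 2) := by
  rw [Rfun, cmat_add_smul]
  congr 1
  simp only [Pi.add_apply, Pi.smul_apply, smul_eq_mul, Finset.mul_sum, Finset.sum_mul,
    ← Finset.sum_add_distrib, Finset.sum_div]
  exact Finset.sum_congr rfl fun l _ => by ring

end ReplicaSymmetric

theorem stmt5_general {L : ℕ} (lam : Fin L → ℝ) (hlam : ∀ l, 0 < lam l)
    (B : Matrix (Fin L) (Fin L) ℝ) (hB : B.PosDef)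
    (σ : ℝ) (hσ : 1 ≤ σ)
    (χs : Fin L → ℝ) (hχs : ∀ l, -1 < χs l ∧ χs l < 0)
    (hmin : IsLocalMin (Rfun σ lam B) χs) :
    (Matrix.diagonal lam
        - Matrix.diagonal lam *
            Matrix.hadamard (Cmat σ lam B χs)⁻¹ (Cmat σ lam B χs)⁻¹ *
          Matrix.diagonal lam).PosDef := by
  set C := Cmat σ lam B χs with hCdef
  have hC : C.PosDef :=
    cmat_posDef (by linarith) hB fun l => (mul_pos (hlam l) (by linarith [(hχs l).1])).le
  have hM : C⁻¹.IsHermitian := hC.inv.isHermitian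
  refine .of_dotProduct_mulVec_pos ((isHermitian_diagonal lam).sub
    (by simpa using isHermitian_mul_mul_conjTranspose (diagonal lam) (hM.hadamard hM)))
    fun x hx => ?_
  obtain ⟨μ, hdet, htrace⟩ := hC.exists_det_add_smul_eq_mul_prod (isHermitian_diagonal (lam * x))
  have hq : 0 < ∑ l, lam l * x l ^ 2 := by
    obtain ⟨l₀, hl₀ : x l₀ ≠ 0⟩ := Function.ne_iff.mp hx
    exact Finset.sum_pos' (fun l _ => by have := hlam l; positivity)
      ⟨l₀, Finset.mem_univ _, mul_pos (hlam l₀) (by positivity)⟩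
  have hline : IsLocalMin (fun t : ℝ => Rfun σ lam B (χs + t • x)) 0 :=
    IsLocalMin.comp_continuous (f := Rfun σ lam B) (g := fun t : ℝ => χs + t • x) (b := 0)
      (by simpa using hmin) (by fun_prop)
  simp only [rfun_add_smul, ← hCdef, hdet] at hline
  have key := sum_sq_lt_of_isLocalMin_log_prod hC.det_pos hq hline
  have hquad : x ⬝ᵥ (diagonal lam *ᵥ x) = ∑ l, lam l * x l ^ 2 := by
    simp only [dotProduct, mulVec_diagonal]
    exact Finset.sum_congr rfl fun l _ => by ring
  rw [star_trivial, sub_mulVec, dotProduct_sub, dotProduct_mulVec_diagonal_hadamard_diagonal,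
    ← conjTranspose_eq_transpose_of_trivial, hM.eq, ← htrace, hquad]
  linarith

/-- for `σ ≥ 1`, at any interior local minimizer `χ* ∈ (-1,0)^L` of `R(·,σ)`
with vanishing gradient, the Hessian `Λ − Λ(M*⊙M*)Λ`, where
`M* = (σB⁻¹ + Diag(λ⊙(χ*+𝟙)))⁻¹`, is positive definite. -/
theorem stmt5 {L : ℕ} (hL : 0 < L) (lam : Fin L → ℝ) (hlam : ∀ l, 0 < lam l)
    (B : Matrix (Fin L) (Fin L) ℝ) (hB : B.PosDef) (hBdiag : ∀ l, B l l = 1)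
    (σ : ℝ) (hσ : 1 ≤ σ)
    (χs : Fin L → ℝ) (hχs : ∀ l, -1 < χs l ∧ χs l < 0)
    (hmin : IsLocalMin (Rfun σ lam B) χs)
    (hgrad : fderiv ℝ (Rfun σ lam B) χs = 0) :
    (Matrix.diagonal lam
        - Matrix.diagonal lam *
            Matrix.hadamard (Cmat σ lam B χs)⁻¹ (Cmat σ lam B χs)⁻¹ *
          Matrix.diagonal lam).PosDef :=
  stmt5_general lam hlam B hB σ hσ χs hχs hmin
end

section
/- Assume B is irreducible and SNR(λ,B) > 1. Then there exists a real symmetric L×L matrix M with 0 ≺ M ≺ B (M positive definite and B − M positive definite) solving the matrix Dyson equation at z = 1, i.e. M^{-1} = B^{-1} + Λ − Diag(λ⊙diag(M)). -/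
open Matrix

/-- A square matrix is irreducible if there is no nonempty proper subset `S` of the index set
with `A i j = 0` for all `i ∈ S` and `j ∉ S`. -/
def MatrixIrreducible {L : ℕ} (A : Matrix (Fin L) (Fin L) ℝ) : Prop :=
  ¬ ∃ S : Finset (Fin L), S.Nonempty ∧ S ≠ Finset.univ ∧
      ∀ i ∈ S, ∀ j ∉ S, A i j = 0

/-!
Write `M(d) = (B⁻¹ + Diag d)⁻¹`. The Dyson equation for `M = M(d)` is the fixed-point equation
`d = F d` with `F d = λ ⊙ (1 - diag M(d))`. As `d ↦ M(d)` is antitone in the Loewner order, `F` is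
monotone on `d ≥ 0`, and `F λ ≤ λ`. From `B - M(d) = B D B - B D M(d) D B ⪰ B D B - B D B D B`
(with `D = Diag d`) one gets `F (t v) ≥ t v` for small `t > 0`, where `v = √λ ⊙ u` and `u` is the
positive Perron vector of `Diag(√λ)(B⊙B)Diag(√λ)`: indeed `λ ⊙ diag(B Diag(v) B) = SNR · v` and
`SNR > 1`. Knaster–Tarski on the box `[t v, λ]` then yields a fixed point `d ≥ t v > 0`, and
`d > 0` makes `M(d) ≺ B` strict.
-/

open scoped ComplexOrder MatrixOrder

namespace Matrix

variable {n : Type*} [Fintype n] [DecidableEq n]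

theorem inv_sub_inv_add_eq {K : Type*} [Field K] {A P : Matrix n n K} (hA : IsUnit A.det)
    (hAP : IsUnit (A + P).det) :
    A⁻¹ - (A + P)⁻¹ =
      (A + P)⁻¹ * P * (A + P)⁻¹ + (A + P)⁻¹ * P * A⁻¹ * P * (A + P)⁻¹ := by
  set C := A + P
  have hP : P = C - A := by simp [C]
  have hAC : A⁻¹ = C⁻¹ + A⁻¹ * P * C⁻¹ := by
    rw [hP, mul_sub, sub_mul, mul_nonsing_inv_cancel_right _ _ hAP, nonsing_inv_mul _ hA, one_mul]
    abel
  calc A⁻¹ - C⁻¹ = C⁻¹ * P * A⁻¹ := by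
        rw [hP, mul_sub, sub_mul, nonsing_inv_mul _ hAP, mul_nonsing_inv_cancel_right _ _ hA,
          one_mul]
    _ = C⁻¹ * P * (C⁻¹ + A⁻¹ * P * C⁻¹) := by rw [← hAC]
    _ = _ := by simp only [Matrix.mul_add, Matrix.mul_assoc]

section RCLike

variable {𝕜 : Type*} [RCLike 𝕜] {A B P : Matrix n n 𝕜}

theorem PosDef.inv_add_le_inv (hA : A.PosDef) (hP : P.PosSemidef) : (A + P)⁻¹ ≤ A⁻¹ := by
  have hC := hA.add_posSemidef hP
  rw [le_iff, inv_sub_inv_add_eq hA.det_pos.ne'.isUnit hC.det_pos.ne'.isUnit]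
  refine .add ?_ ?_
  · simpa [hC.inv.1.eq] using hP.mul_mul_conjTranspose_same (A + P)⁻¹
  · simpa [hC.inv.1.eq, hP.1.eq, Matrix.mul_assoc] using
      hA.inv.posSemidef.mul_mul_conjTranspose_same ((A + P)⁻¹ * P)

theorem PosDef.posDef_inv_sub_inv_add (hA : A.PosDef) (hP : P.PosDef) :
    (A⁻¹ - (A + P)⁻¹).PosDef := by
  have hC := hA.add hP
  rw [inv_sub_inv_add_eq hA.det_pos.ne'.isUnit hC.det_pos.ne'.isUnit]
  refine .add_posSemidef ?_ ?_
  · simpa [star_eq_conjTranspose, hC.inv.1.eq] using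
      (IsUnit.posDef_star_right_conjugate_iff hC.inv.isUnit).2 hP
  · simpa [hC.inv.1.eq, hP.1.eq, Matrix.mul_assoc] using
      hA.inv.posSemidef.mul_mul_conjTranspose_same ((A + P)⁻¹ * P)

theorem PosDef.mul_mul_sub_le_sub_inv_inv_add (hB : B.PosDef) (hP : P.PosSemidef) :
    B * P * B - B * P * B * P * B ≤ B - (B⁻¹ + P)⁻¹ := by
  set R := (B⁻¹ + P)⁻¹
  have hBu : IsUnit B.det := hB.det_pos.ne'.isUnit
  have hRu : IsUnit (B⁻¹ + P).det := (hB.inv.add_posSemidef hP).det_pos.ne'.isUnit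
  have hR : B - R = B * P * R :=
    calc B - R = B * ((B⁻¹ + P) * R) - R := by rw [mul_nonsing_inv _ hRu, Matrix.mul_one]
      _ = B * P * R := by
        rw [Matrix.add_mul, Matrix.mul_add, ← Matrix.mul_assoc B B⁻¹, mul_nonsing_inv _ hBu,
          Matrix.one_mul, Matrix.mul_assoc]
        abel
  have hR' : B - R = R * P * B :=
    calc B - R = R * (B⁻¹ + P) * B - R := by rw [nonsing_inv_mul _ hRu, Matrix.one_mul]
      _ = R * P * B := by
        rw [Matrix.mul_add, Matrix.add_mul, Matrix.mul_assoc R B⁻¹ B, nonsing_inv_mul _ hBu,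
          Matrix.mul_one]
        abel
  have hBR : B - R = B * P * B - B * P * R * P * B := by
    have hR2 : R = B - R * P * B := by rw [← hR', sub_sub_cancel]
    rw [hR]
    nth_rewrite 1 [hR2]
    simp only [Matrix.mul_sub, Matrix.mul_assoc]
  have hle : R ≤ B := by
    simpa [nonsing_inv_nonsing_inv _ hBu] using hB.inv.inv_add_le_inv hP
  rw [le_iff, hBR]
  convert (le_iff.1 hle).mul_mul_conjTranspose_same (B * P) using 1
  simp [hB.1.eq, hP.1.eq, Matrix.mul_sub, Matrix.sub_mul, Matrix.mul_assoc]

end RCLike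

theorem IsHermitian.posSemidef_smul_one_sub {S : Matrix n n ℝ} (hS : S.IsHermitian) {ρ : ℝ}
    (hρ : ∀ i, hS.eigenvalues i ≤ ρ) : (ρ • 1 - S).PosSemidef := by
  rw [posSemidef_iff_isHermitian_and_spectrum_nonneg, ← Algebra.algebraMap_eq_smul_one,
    ← spectrum.singleton_sub_eq, hS.spectrum_real_eq_range_eigenvalues]
  refine ⟨(IsSelfAdjoint.algebraMap _ (.all ρ)).sub hS, ?_⟩
  rintro _ ⟨_, rfl, _, ⟨i, rfl⟩, rfl⟩
  exact sub_nonneg.2 (hρ i)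

theorem mulVec_abs_eq_smul {S : Matrix n n ℝ} (hS : ∀ i j, 0 ≤ S i j) {ρ : ℝ}
    (hρ : (ρ • 1 - S).PosSemidef) {w : n → ℝ} (hw : S *ᵥ w = ρ • w) : S *ᵥ |w| = ρ • |w| := by
  have habs : w ⬝ᵥ (S *ᵥ w) ≤ |w| ⬝ᵥ (S *ᵥ |w|) := by
    simp only [dotProduct, mulVec, Finset.mul_sum]
    refine Finset.sum_le_sum fun i _ => Finset.sum_le_sum fun j _ => ?_
    calc w i * (S i j * w j) ≤ |w i * (S i j * w j)| := le_abs_self _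
      _ = |w| i * (S i j * |w| j) := by simp [abs_mul, abs_of_nonneg (hS i j)]
  have hww : |w| ⬝ᵥ |w| = w ⬝ᵥ w := by
    simp only [dotProduct, Pi.abs_apply, abs_mul_abs_self]
  have hzero : |w| ⬝ᵥ ((ρ • 1 - S) *ᵥ |w|) = 0 := by
    refine le_antisymm ?_ (by simpa using hρ.dotProduct_mulVec_nonneg |w|)
    rw [sub_mulVec, dotProduct_sub, smul_mulVec, one_mulVec, dotProduct_smul, hww,
      ← dotProduct_smul, ← hw]
    linarith
  have := (hρ.dotProduct_mulVec_zero_iff |w|).1 (by simpa using hzero)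
  rw [sub_mulVec, smul_mulVec, one_mulVec, sub_eq_zero] at this
  exact this.symm

theorem diagonal_mul_hadamard_self_mul_diagonal_nonneg (B : Matrix n n ℝ) {s : n → ℝ}
    (hs : 0 ≤ s) (i j : n) :
    0 ≤ (diagonal s * B ⊙ B * diagonal s) i j := by
  simpa [mul_diagonal, diagonal_mul] using
    mul_nonneg (mul_nonneg (hs i) (mul_self_nonneg (B i j))) (hs j)

theorem IsHermitian.mul_mul_diagonal_mul_apply_self {B : Matrix n n ℝ} (hB : B.IsHermitian)
    {lam u : n → ℝ} (hlam : 0 ≤ lam) {ρ : ℝ}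
    (hu : (diagonal (fun l => √(lam l)) * B ⊙ B * diagonal (fun l => √(lam l))) *ᵥ u = ρ • u)
    (l : n) :
    lam l * (B * diagonal (fun k => √(lam k) * u k) * B) l l = ρ * (√(lam l) * u l) := by
  have h := congrFun hu l
  simp only [mulVec, dotProduct, mul_diagonal, diagonal_mul, hadamard_apply, Pi.smul_apply,
    smul_eq_mul] at h
  calc lam l * (B * diagonal (fun k => √(lam k) * u k) * B) l l
      = √(lam l) * (√(lam l) * (B * diagonal (fun k => √(lam k) * u k) * B) l l) := by
        rw [← mul_assoc, Real.mul_self_sqrt (hlam l)]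
    _ = √(lam l) * ∑ k, √(lam l) * (B l k * B l k) * √(lam k) * u k := by
        rw [mul_apply, Finset.mul_sum]
        refine congrArg _ (Finset.sum_congr rfl fun k _ => ?_)
        rw [mul_diagonal, ← hB.apply l k, star_trivial]
        ring
    _ = ρ * (√(lam l) * u l) := by rw [h]; ring

end Matrix

theorem MatrixIrreducible.of_eq_zero_imp {L : ℕ} {A A' : Matrix (Fin L) (Fin L) ℝ}
    (hA : MatrixIrreducible A) (h : ∀ i j, A' i j = 0 → A i j = 0) : MatrixIrreducible A' :=
  fun ⟨T, hT, hTu, hzero⟩ => hA ⟨T, hT, hTu, fun i hi j hj => h i j (hzero i hi j hj)⟩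

theorem MatrixIrreducible.diagonal_mul_hadamard_self_mul_diagonal {L : ℕ}
    {B : Matrix (Fin L) (Fin L) ℝ} (hB : MatrixIrreducible B) {s : Fin L → ℝ}
    (hs : ∀ l, s l ≠ 0) : MatrixIrreducible (diagonal s * B ⊙ B * diagonal s) :=
  hB.of_eq_zero_imp fun i j hij => by simpa [mul_diagonal, diagonal_mul, hs i, hs j] using hij

theorem MatrixIrreducible.pos_of_mulVec_eq_smul {L : ℕ} {S : Matrix (Fin L) (Fin L) ℝ}
    (hS : MatrixIrreducible S) (hnn : ∀ i j, 0 ≤ S i j) {ρ : ℝ} {u : Fin L → ℝ} (hu : 0 ≤ u)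
    (hu0 : u ≠ 0) (hSu : S *ᵥ u = ρ • u) (i : Fin L) : 0 < u i := by
  by_contra! hi
  refine hS ⟨Finset.univ.filter (u · = 0), ⟨i, by simpa using le_antisymm hi (hu i)⟩, ?_,
    fun k hk j hj => ?_⟩
  · intro h
    refine hu0 (funext fun k => ?_)
    have hk : k ∈ Finset.univ.filter (u · = 0) := by rw [h]; exact Finset.mem_univ k
    simpa using hk
  · simp only [Finset.mem_filter, Finset.mem_univ, true_and] at hk hj
    have hsum : ∑ l, S k l * u l = 0 := by simpa [mulVec, dotProduct, hk] using congrFun hSu k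
    have := (Finset.sum_eq_zero_iff_of_nonneg fun l _ => mul_nonneg (hnn k l) (hu l)).1 hsum j
      (Finset.mem_univ j)
    exact (mul_eq_zero.1 this).resolve_right hj

theorem MatrixIrreducible.exists_pos_eigenvector {L : ℕ} [Nonempty (Fin L)]
    {S : Matrix (Fin L) (Fin L) ℝ} (hirr : MatrixIrreducible S) (hS : S.IsHermitian)
    (hnn : ∀ i j, 0 ≤ S i j) :
    ∃ u : Fin L → ℝ, (∀ i, 0 < u i) ∧ S *ᵥ u = (⨆ i, hS.eigenvalues i) • u := by
  obtain ⟨i₀, hi₀⟩ := Finite.exists_max hS.eigenvalues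
  have hρ : (⨆ i, hS.eigenvalues i) = hS.eigenvalues i₀ :=
    le_antisymm (ciSup_le hi₀) (le_ciSup (Finite.bddAbove_range _) i₀)
  set w : Fin L → ℝ := ⇑(hS.eigenvectorBasis i₀)
  have hw0 : w ≠ 0 := fun h =>
    hS.eigenvectorBasis.orthonormal.ne_zero i₀ (by ext j; exact congrFun h j)
  have hSw : S *ᵥ |w| = hS.eigenvalues i₀ • |w| :=
    mulVec_abs_eq_smul hnn (hS.posSemidef_smul_one_sub hi₀)
      (hS.mulVec_eigenvectorBasis i₀)
  exact ⟨|w|, hirr.pos_of_mulVec_eq_smul hnn (abs_nonneg w) (by simpa using hw0) hSw,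
    hρ ▸ hSw⟩

theorem exists_fixedPt_of_monotoneOn_Icc {α : Type*} [ConditionallyCompleteLattice α]
    {f : α → α} {a b : α} (hab : a ≤ b) (hf : MonotoneOn f (Set.Icc a b)) (ha : a ≤ f a)
    (hb : f b ≤ b) : ∃ x ∈ Set.Icc a b, f x = x := by
  have hmaps : Set.MapsTo f (Set.Icc a b) (Set.Icc a b) := fun x hx =>
    ⟨ha.trans (hf ⟨le_rfl, hab⟩ hx hx.1), (hf hx ⟨hab, le_rfl⟩ hx.2).trans hb⟩
  have : Fact (a ≤ b) := ⟨hab⟩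
  let g : Set.Icc a b →o Set.Icc a b := ⟨hmaps.restrict, fun x y hxy => hf x.2 y.2 hxy⟩
  exact ⟨g.lfp, g.lfp.2, congrArg Subtype.val g.map_lfp⟩

section Dyson

open Filter Topology

variable {n : Type*} [Fintype n] [DecidableEq n] {B : Matrix n n ℝ} {lam d : n → ℝ}

noncomputable def dysonResolvent (B : Matrix n n ℝ) (d : n → ℝ) : Matrix n n ℝ :=
  (B⁻¹ + diagonal d)⁻¹

/-- `M = dysonResolvent B d` solves the Dyson equation `M⁻¹ = B⁻¹ + Λ - Diag(λ ⊙ diag M)`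
exactly when `d` is a fixed point of `dysonMap lam B`. -/
noncomputable def dysonMap (lam : n → ℝ) (B : Matrix n n ℝ) (d : n → ℝ) : n → ℝ :=
  fun l => lam l * (1 - dysonResolvent B d l l)

theorem posDef_dysonResolvent (hB : B.PosDef) (hd : 0 ≤ d) : (dysonResolvent B d).PosDef :=
  (hB.inv.add_posSemidef (PosSemidef.diagonal hd)).inv

theorem posDef_sub_dysonResolvent (hB : B.PosDef) (hd : ∀ l, 0 < d l) :
    (B - dysonResolvent B d).PosDef := by
  simpa [dysonResolvent, nonsing_inv_nonsing_inv _ hB.det_pos.ne'.isUnit] using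
    hB.inv.posDef_inv_sub_inv_add (posDef_diagonal_iff.2 hd)

theorem dysonResolvent_inv_eq (hB : B.PosDef) (hd : 0 ≤ d) (hfix : dysonMap lam B d = d) :
    (dysonResolvent B d)⁻¹ =
      B⁻¹ + diagonal lam - diagonal (fun l => lam l * dysonResolvent B d l l) := by
  have hunit := (hB.inv.add_posSemidef (PosSemidef.diagonal hd)).det_pos.ne'.isUnit
  rw [dysonResolvent, nonsing_inv_nonsing_inv _ hunit, add_sub_assoc, diagonal_sub]
  congr 2
  funext l
  have := congrFun hfix l
  simp only [dysonMap, dysonResolvent] at this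
  linarith

theorem dysonMap_le (hB : B.PosDef) (hlam : 0 ≤ lam) (hd : 0 ≤ d) : dysonMap lam B d ≤ lam :=
  fun l => mul_le_of_le_one_right (hlam l) (sub_le_self _ (posDef_dysonResolvent hB hd).diag_pos.le)

theorem dysonMap_monotoneOn (hB : B.PosDef) (hlam : 0 ≤ lam) :
    MonotoneOn (dysonMap lam B) (Set.Ici 0) := by
  intro a ha b _ hab l
  have hle : dysonResolvent B b ≤ dysonResolvent B a := by
    have := (hB.inv.add_posSemidef (PosSemidef.diagonal ha)).inv_add_le_inv
      (PosSemidef.diagonal (sub_nonneg.2 hab))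
    simpa [dysonResolvent, add_assoc, diagonal_add] using this
  have := (le_iff.1 hle).diag_nonneg (i := l)
  rw [Matrix.sub_apply] at this
  exact mul_le_mul_of_nonneg_left (by linarith) (hlam l)

theorem exists_smul_le_dysonMap (hB : B.PosDef) (hBdiag : ∀ l, B l l = 1)
    (hlam : ∀ l, 0 < lam l) {v : n → ℝ} (hv : ∀ l, 0 < v l) {ρ : ℝ} (hρ : 1 < ρ)
    (heig : ∀ l, lam l * (B * diagonal v * B) l l = ρ * v l) :
    ∃ t : ℝ, 0 < t ∧ t • v ≤ lam ∧ t • v ≤ dysonMap lam B (t • v) := by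
  set G := B * diagonal v * B * diagonal v * B
  have hto0 : ∀ c : ℝ, Tendsto (· * c) (𝓝 0) (𝓝 0) := fun c => by
    simpa using (tendsto_id (x := 𝓝 (0 : ℝ))).mul_const c
  have hsmall : ∀ᶠ t in 𝓝[>] (0 : ℝ),
      ∀ l, t * v l < lam l ∧ t * (lam l * G l l) < (ρ - 1) * v l :=
    nhdsWithin_le_nhds <| eventually_all.2 fun l =>
      ((hto0 _).eventually_lt_const (hlam l)).and
        ((hto0 _).eventually_lt_const (mul_pos (sub_pos.2 hρ) (hv l)))
  obtain ⟨t, ht, ht0⟩ := (hsmall.and self_mem_nhdsWithin).exists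
  refine ⟨t, ht0, fun l => (ht l).1.le, fun l => ?_⟩
  have hP : (t • diagonal v).PosSemidef := (PosSemidef.diagonal fun l => (hv l).le).smul ht0.le
  have hsecond := (le_iff.1 (hB.mul_mul_sub_le_sub_inv_inv_add hP)).diag_nonneg (i := l)
  simp only [Matrix.mul_smul, Matrix.smul_mul, smul_smul, Matrix.sub_apply, Matrix.smul_apply,
    smul_eq_mul, hBdiag, sub_nonneg] at hsecond
  calc (t • v) l ≤ t * ρ * v l - t * (t * (lam l * G l l)) := by
        have := mul_le_mul_of_nonneg_left (ht l).2.le ht0.le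
        simp only [Pi.smul_apply, smul_eq_mul]
        linarith
    _ = lam l * (t * (B * diagonal v * B) l l - t * t * G l l) := by
        linear_combination -t * heig l
    _ ≤ dysonMap lam B (t • v) l := by
        rw [dysonMap, dysonResolvent, diagonal_smul]
        exact mul_le_mul_of_nonneg_left hsecond (hlam l).le

end Dyson

/-- if `B` is irreducible and `SNR(λ,B) > 1` (largest eigenvalue of
`Diag(√λ)(B⊙B)Diag(√λ)` greater than one), then there is a real symmetric matrix `M`
with `0 ≺ M ≺ B` solving the matrix Dyson equation at `z = 1`:
`M⁻¹ = B⁻¹ + Λ − Diag(λ ⊙ diag M)`. -/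
theorem stmt6 {L : ℕ} (hL : 0 < L) (lam : Fin L → ℝ) (hlam : ∀ l, 0 < lam l)
    (B : Matrix (Fin L) (Fin L) ℝ) (hB : B.PosDef) (hBdiag : ∀ l, B l l = 1)
    (hIrr : MatrixIrreducible B)
    (hS : (Matrix.diagonal (fun l => Real.sqrt (lam l)) * Matrix.hadamard B B *
        Matrix.diagonal (fun l => Real.sqrt (lam l))).IsHermitian)
    (hSNR : 1 < ⨆ i, hS.eigenvalues i) :
    ∃ M : Matrix (Fin L) (Fin L) ℝ, Mᵀ = M ∧ M.PosDef ∧ (B - M).PosDef ∧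
      M⁻¹ = B⁻¹ + Matrix.diagonal lam - Matrix.diagonal (fun l => lam l * M l l) := by
  have : Nonempty (Fin L) := ⟨⟨0, hL⟩⟩
  have hlam0 : 0 ≤ lam := fun l => (hlam l).le
  obtain ⟨u, hu, hSu⟩ := (hIrr.diagonal_mul_hadamard_self_mul_diagonal
      fun l => (Real.sqrt_pos.2 (hlam l)).ne').exists_pos_eigenvector hS
    (diagonal_mul_hadamard_self_mul_diagonal_nonneg B fun l => Real.sqrt_nonneg _)
  set v : Fin L → ℝ := fun l => √(lam l) * u l
  have hv : ∀ l, 0 < v l := fun l => mul_pos (Real.sqrt_pos.2 (hlam l)) (hu l)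
  obtain ⟨t, ht, htv_le, htv_sub⟩ := exists_smul_le_dysonMap hB hBdiag hlam hv hSNR
    (hB.1.mul_mul_diagonal_mul_apply_self hlam0 hSu)
  have htv : 0 ≤ t • v := fun l => (smul_pos ht (hv l)).le
  obtain ⟨d, ⟨htd, -⟩, hd⟩ := exists_fixedPt_of_monotoneOn_Icc htv_le
    ((dysonMap_monotoneOn hB hlam0).mono fun x hx => htv.trans hx.1) htv_sub
    (dysonMap_le hB hlam0 hlam0)
  have hdpos : ∀ l, 0 < d l := fun l => (smul_pos ht (hv l)).trans_le (htd l)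
  have hM := posDef_dysonResolvent hB (htv.trans htd)
  exact ⟨dysonResolvent B d, by rw [← conjTranspose_eq_transpose_of_trivial, hM.1.eq], hM,
    posDef_sub_dysonResolvent hB hdpos, dysonResolvent_inv_eq hB (htv.trans htd) hd⟩
end

section
/- Let M be a real symmetric positive definite L×L matrix solving the matrix Dyson equation at z = 1, i.e. M^{-1} = B^{-1} + Λ − Diag(λ⊙diag(M)). Define w := √λ ⊙ (𝟙_L − diag(M)) ∈ ℝ^L. Then (I_L − Diag(√λ)(B⊙M)Diag(√λ))·w = 0. -/
open Matrix

/-- if the real symmetric positive definite matrix `M` solves the matrix Dyson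
equation at `z = 1`, i.e. `M⁻¹ = B⁻¹ + Λ − Diag(λ ⊙ diag M)`, and
`w := √λ ⊙ (𝟙 − diag M)`, then `(I − Diag(√λ)(B⊙M)Diag(√λ)) w = 0`. -/
theorem stmt7 {L : ℕ} (hL : 0 < L) (lam : Fin L → ℝ) (hlam : ∀ l, 0 < lam l)
    (B : Matrix (Fin L) (Fin L) ℝ) (hB : B.PosDef) (hBdiag : ∀ l, B l l = 1)
    (M : Matrix (Fin L) (Fin L) ℝ) (hMsym : Mᵀ = M) (hM : M.PosDef)
    (hMDE : M⁻¹ = B⁻¹ + Matrix.diagonal lam - Matrix.diagonal (fun l => lam l * M l l)) :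
    ((1 : Matrix (Fin L) (Fin L) ℝ)
        - Matrix.diagonal (fun l => Real.sqrt (lam l)) * Matrix.hadamard B M *
            Matrix.diagonal (fun l => Real.sqrt (lam l))) *ᵥ
        (fun l => Real.sqrt (lam l) * (1 - M l l)) = 0 := by
  have hBdet : IsUnit B.det := isUnit_iff_ne_zero.mpr hB.det_pos.ne'
  have hMdet : IsUnit M.det := isUnit_iff_ne_zero.mpr hM.det_pos.ne'
  set d : Fin L → ℝ := fun l => lam l * (1 - M l l) with hd
  have hBinv : B⁻¹ = M⁻¹ - Matrix.diagonal d := by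
    rw [hMDE]
    ext i j
    by_cases h : i = j <;>
      simp [Matrix.sub_apply, Matrix.add_apply, Matrix.diagonal, h, hd] <;> ring
  -- B * (M⁻¹ - D) = 1
  have h1 : B * (M⁻¹ - Matrix.diagonal d) = 1 := by
    rw [← hBinv]; exact Matrix.mul_nonsing_inv B hBdet
  have key : B = M + B * Matrix.diagonal d * M := by
    have h2 : (B * (M⁻¹ - Matrix.diagonal d)) * M = M := by rw [h1, one_mul]
    rw [Matrix.mul_sub, Matrix.sub_mul] at h2
    have h4 : B * M⁻¹ * M = B := by
      rw [Matrix.mul_assoc, Matrix.nonsing_inv_mul M hMdet, Matrix.mul_one]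
    rw [h4] at h2
    exact sub_eq_iff_eq_add.mp h2
  have hkey : ∀ l, 1 - M l l = ∑ k, B l k * (d k * M k l) := by
    intro l
    have := congrFun (congrFun key l) l
    rw [Matrix.add_apply, hBdiag l] at this
    have hbdm : (B * Matrix.diagonal d * M) l l = ∑ k, (B l k * d k) * M k l := by
      rw [Matrix.mul_apply]
      refine Finset.sum_congr rfl fun k _ => ?_
      rw [Matrix.mul_diagonal]
    rw [hbdm] at this
    have hs : ∑ k, (B l k * d k) * M k l = ∑ k, B l k * (d k * M k l) :=
      Finset.sum_congr rfl fun k _ => by ring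
    rw [hs] at this
    linarith
  funext l
  have hMs : ∀ k, M k l = M l k := by
    intro k
    have h := congrFun (congrFun hMsym k) l
    rw [Matrix.transpose_apply] at h
    exact h.symm
  simp only [Matrix.sub_mulVec, Matrix.one_mulVec, Pi.sub_apply, Pi.zero_apply]
  rw [sub_eq_zero]
  have hsq : ∀ k, Real.sqrt (lam k) * Real.sqrt (lam k) = lam k :=
    fun k => Real.mul_self_sqrt (hlam k).le
  show Real.sqrt (lam l) * (1 - M l l) = _
  rw [Matrix.mulVec, dotProduct]
  have : ∀ j, (Matrix.diagonal (fun l => Real.sqrt (lam l)) * Matrix.hadamard B M *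
      Matrix.diagonal (fun l => Real.sqrt (lam l))) l j
      = Real.sqrt (lam l) * (B l j * M l j) * Real.sqrt (lam j) := by
    intro j
    rw [Matrix.mul_diagonal, Matrix.diagonal_mul]
    rfl
  calc Real.sqrt (lam l) * (1 - M l l)
      = Real.sqrt (lam l) * ∑ k, B l k * (d k * M k l) := by rw [← hkey l]
    _ = ∑ j, Real.sqrt (lam l) * (B l j * M l j) * Real.sqrt (lam j) *
          (Real.sqrt (lam j) * (1 - M j j)) := by
        rw [Finset.mul_sum]
        refine Finset.sum_congr rfl fun j _ => ?_
        rw [hMs j]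
        simp only [hd]
        linear_combination (-(Real.sqrt (lam l) * B l j * M l j * (1 - M j j))) * (hsq j)
    _ = _ := by
        refine Finset.sum_congr rfl fun j _ => ?_
        rw [this j]
end

section
/- Let M be a real symmetric L×L matrix with 0 ≺ M ≺ B (M positive definite and B − M positive definite) solving the matrix Dyson equation at z = 1, i.e. M^{-1} = B^{-1} + Λ − Diag(λ⊙diag(M)). Then the matrix Q := I_L − Diag(√λ)(B⊙M)Diag(√λ) is positive semidefinite. -/
/-!
With `d := λ ⊙ (1 - diag M) > 0`, the Dyson equation reads `M⁻¹ = B⁻¹ + Diag d`, so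
`H := Diag d⁻¹ + B` is positive definite with `H⁻¹ = Diag d - Diag d * M * Diag d`.
Conjugating by `Diag (√λ / d)` turns `H ⊙ H⁻¹ - 1` into `Q`, and `H ⊙ H⁻¹ - 1 ⪰ 0` is Fiedler's
inequality. The latter follows from the Schur product theorem applied to the positive
semidefinite block matrices `[[H, 1], [1, H⁻¹]]` and `[[H⁻¹, 1], [1, H]]`.
-/

open Matrix
open scoped ComplexOrder

namespace Matrix

theorem fromBlocks_hadamard_fromBlocks {α l m n o : Type*} [Mul α]
    (A A' : Matrix n l α) (B B' : Matrix n m α) (C C' : Matrix o l α) (D D' : Matrix o m α) :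
    fromBlocks A B C D ⊙ fromBlocks A' B' C' D' =
      fromBlocks (A ⊙ A') (B ⊙ B') (C ⊙ C') (D ⊙ D') := by
  ext (i | i) (j | j) <;> rfl

section Fiedler

variable {𝕜 n : Type*} [RCLike 𝕜] [Fintype n] [DecidableEq n]

theorem PosDef.posSemidef_fromBlocks_self_one_one_inv {H : Matrix n n 𝕜} (hH : H.PosDef) :
    (fromBlocks H 1 1 H⁻¹).PosSemidef := by
  have := hH.isUnit.invertible
  simpa using (PosDef.fromBlocks₁₁ (1 : Matrix n n 𝕜) H⁻¹ hH).2 (by simpa using .zero)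

theorem PosDef.posSemidef_fromBlocks_inv_one_one_self {H : Matrix n n 𝕜} (hH : H.PosDef) :
    (fromBlocks H⁻¹ 1 1 H).PosSemidef := by
  have := hH.isUnit.invertible
  simpa using (PosDef.fromBlocks₂₂ H⁻¹ (1 : Matrix n n 𝕜) hH).2 (by simpa using .zero)

theorem PosSemidef.sub_one_of_fromBlocks {A : Matrix n n 𝕜}
    (hA : (fromBlocks A 1 1 A).PosSemidef) : (A - 1).PosSemidef := by
  -- conjugating by the block row `[1, -1]` gives `2 • (A - 1)`
  have h := hA.mul_mul_conjTranspose_same (fromCols (1 : Matrix n n 𝕜) (-1))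
  rw [fromCols_mul_fromBlocks, conjTranspose_fromCols_eq_fromRows_conjTranspose,
    fromCols_mul_fromRows] at h
  convert h.smul (show (0 : ℝ) ≤ 2⁻¹ by norm_num) using 1
  simp only [one_mul, mul_one, conjTranspose_one, neg_mul, conjTranspose_neg, mul_neg,
    neg_add_rev, neg_neg, smul_add, smul_neg]
  module

theorem PosDef.posSemidef_hadamard_inv_sub_one {H : Matrix n n 𝕜} (hH : H.PosDef) :
    (H ⊙ H⁻¹ - 1).PosSemidef := by
  have h := hH.posSemidef_fromBlocks_self_one_one_inv.hadamard
    hH.posSemidef_fromBlocks_inv_one_one_self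
  rw [fromBlocks_hadamard_fromBlocks, hadamard_comm H⁻¹ H, hadamard_one, diag_one] at h
  exact h.sub_one_of_fromBlocks

end Fiedler

section Dyson

variable {K n : Type*} [Field K] [Fintype n] [DecidableEq n]

theorem inv_add_eq_sub_mul_mul_of_inv_eq_inv_add {B M D E : Matrix n n K}
    (hB : IsUnit B.det) (hM : IsUnit M.det) (hED : E * D = 1) (h : M⁻¹ = B⁻¹ + D) :
    (E + B)⁻¹ = D - D * M * D := by
  have hBDM : B * D * M = B - M := by
    have := congrArg (B * · * M) h
    simp only [nonsing_inv_mul_cancel_right M B hM, Matrix.mul_add, Matrix.add_mul,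
      mul_nonsing_inv B hB, Matrix.one_mul] at this
    exact eq_sub_of_add_eq' this.symm
  refine inv_eq_right_inv ?_
  calc (E + B) * (D - D * M * D) = E * D - E * D * M * D + (B * D - B * D * M * D) := by
        noncomm_ring
    _ = 1 := by rw [hED, hBDM]; noncomm_ring

theorem diagonal_mul_hadamard_sub_one_mul_diagonal {c d : n → K} (hd : ∀ i, d i ≠ 0)
    (B M : Matrix n n K) :
    diagonal (c / d) * ((diagonal d⁻¹ + B) ⊙ (diagonal d - diagonal d * M * diagonal d) - 1) *
        diagonal (c / d)
      = diagonal (fun i => c i ^ 2 * (B i i - M i i) / d i) - diagonal c * (B ⊙ M) * diagonal c := by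
  ext i j
  have hdi := hd i
  rcases eq_or_ne i j with rfl | hij
  · simp only [mul_diagonal, diagonal_mul, Pi.div_apply, sub_apply, hadamard_apply, add_apply,
      diagonal_apply_eq, Pi.inv_apply, one_apply_eq]
    field_simp
    ring
  · have hdj := hd j
    simp only [mul_diagonal, diagonal_mul, Pi.div_apply, sub_apply, hadamard_apply, add_apply,
      diagonal_apply_ne _ hij, one_apply_ne hij, zero_add, zero_sub, mul_neg, sub_zero, neg_mul,
      neg_inj]
    field_simp

end Dyson

end Matrix

theorem stmt8_general {L : ℕ} (lam : Fin L → ℝ) (hlam : ∀ l, 0 < lam l)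
    (B : Matrix (Fin L) (Fin L) ℝ) (hB : B.PosDef) (hBdiag : ∀ l, B l l = 1)
    (M : Matrix (Fin L) (Fin L) ℝ)
    (hM : M.PosDef) (hBM : (B - M).PosDef)
    (hMDE : M⁻¹ = B⁻¹ + Matrix.diagonal lam - Matrix.diagonal (fun l => lam l * M l l)) :
    ((1 : Matrix (Fin L) (Fin L) ℝ)
        - Matrix.diagonal (fun l => Real.sqrt (lam l)) * Matrix.hadamard B M *
            Matrix.diagonal (fun l => Real.sqrt (lam l))).PosSemidef := by
  set d : Fin L → ℝ := fun l => lam l * (1 - M l l)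
  have hd (l : Fin L) : 0 < d l := by
    have := hBM.diag_pos (i := l)
    rw [Matrix.sub_apply, hBdiag] at this
    exact mul_pos (hlam l) (by linarith)
  have hMinv : M⁻¹ = B⁻¹ + diagonal d := by
    rw [hMDE, add_sub_assoc, diagonal_sub]
    congr! 3 with l
    ring
  set H := diagonal d⁻¹ + B
  have hH : H.PosDef := (PosDef.diagonal fun l => inv_pos.mpr (hd l)).add hB
  have hHinv : H⁻¹ = diagonal d - diagonal d * M * diagonal d :=
    inv_add_eq_sub_mul_mul_of_inv_eq_inv_add ((isUnit_iff_isUnit_det _).1 hB.isUnit)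
      ((isUnit_iff_isUnit_det _).1 hM.isUnit)
      (by simp [diagonal_mul_diagonal, fun l => (hd l).ne']) hMinv
  set c : Fin L → ℝ := fun l => √(lam l)
  have hQ : 1 - diagonal c * B ⊙ M * diagonal c
      = diagonal (c / d) * (H ⊙ H⁻¹ - 1) * (diagonal (c / d))ᴴ := by
    rw [diagonal_conjTranspose, star_trivial, hHinv,
      diagonal_mul_hadamard_sub_one_mul_diagonal (fun l => (hd l).ne'), ← diagonal_one]
    congr 2
    funext l
    rw [hBdiag, Real.sq_sqrt (hlam l).le]
    exact (div_self (hd l).ne').symm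
  rw [hQ]
  exact hH.posSemidef_hadamard_inv_sub_one.mul_mul_conjTranspose_same _

/-- if the real symmetric matrix `M` with `0 ≺ M ≺ B` solves the matrix Dyson
equation at `z = 1`, i.e. `M⁻¹ = B⁻¹ + Λ − Diag(λ ⊙ diag M)`, then
`Q := I − Diag(√λ)(B⊙M)Diag(√λ)` is positive semidefinite. -/
theorem stmt8 {L : ℕ} (hL : 0 < L) (lam : Fin L → ℝ) (hlam : ∀ l, 0 < lam l)
    (B : Matrix (Fin L) (Fin L) ℝ) (hB : B.PosDef) (hBdiag : ∀ l, B l l = 1)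
    (M : Matrix (Fin L) (Fin L) ℝ) (hMsym : Mᵀ = M)
    (hM : M.PosDef) (hBM : (B - M).PosDef)
    (hMDE : M⁻¹ = B⁻¹ + Matrix.diagonal lam - Matrix.diagonal (fun l => lam l * M l l)) :
    ((1 : Matrix (Fin L) (Fin L) ℝ)
        - Matrix.diagonal (fun l => Real.sqrt (lam l)) * Matrix.hadamard B M *
            Matrix.diagonal (fun l => Real.sqrt (lam l))).PosSemidef :=
  stmt8_general lam hlam B hB hBdiag M hM hBM hMDE
end

section
/- Assume B is irreducible. Let M be a real symmetric L×L matrix with 0 ≺ M ≺ B solving the matrix Dyson equation at z = 1, i.e. M^{-1} = B^{-1} + Λ − Diag(λ⊙diag(M)). Then the kernel of Q := I_L − Diag(√λ)(B⊙M)Diag(√λ) is one-dimensional, and it is spanned by the nonzero vector w := √λ ⊙ (𝟙_L − diag(M)). -/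
/-!
Put `d := λ ⊙ (𝟙 - diag M)`, which is positive because `M ≺ B` and `B` has unit diagonal. The
Dyson equation says `M⁻¹ = B⁻¹ + Diag d`, so `H := Diag d⁻¹ + B` is positive definite with
`H⁻¹ = Diag d - Diag d · M · Diag d`, and a direct computation gives
`Diag w · Q · Diag w = H ⊙ H⁻¹ - I`. Hence `v ∈ ker Q` iff `z := v / w` satisfies
`(H ⊙ H⁻¹) z = z`. By the equality case of Fiedler's inequality `H ⊙ H⁻¹ ⪰ I` this means that
`Diag z` commutes with `H`, i.e. `(z_i - z_j) B_ij = 0` for all `i, j`, and irreducibility of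
`B` forces `z` to be constant.
-/

open Matrix

theorem MatrixIrreducible.eq_of_commute_diagonal {L : ℕ} {B : Matrix (Fin L) (Fin L) ℝ}
    (hB : MatrixIrreducible B) {z : Fin L → ℝ} (hz : Commute (diagonal z) B) (i j : Fin L) :
    z i = z j := by
  have hBz (a b : Fin L) (hab : B a b ≠ 0) : z a = z b :=
    mul_right_cancel₀ hab (by simpa [mul_comm] using congrFun₂ hz.eq a b)
  by_contra hij
  refine hB ⟨Finset.univ.filter (z · = z i), ⟨i, by simp⟩, fun h => hij ?_, fun a ha b hb => ?_⟩
  · have hj : j ∈ Finset.univ.filter (z · = z i) := by rw [h]; exact Finset.mem_univ j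
    simpa [eq_comm] using hj
  · simp only [Finset.mem_filter, Finset.mem_univ, true_and] at ha hb
    by_contra hab
    exact hb (hBz a b hab ▸ ha)

namespace Matrix

variable {n : Type*} [Fintype n] [DecidableEq n]

theorem hadamard_mulVec_apply {R : Type*} [CommSemiring R] (A C : Matrix n n R) (z : n → R)
    (i : n) : ((A ⊙ C) *ᵥ z) i = (A * diagonal z * Cᵀ) i i := by
  rw [mul_apply]
  simp only [mulVec, dotProduct, hadamard_apply, mul_diagonal, transpose_apply]
  exact Finset.sum_congr rfl fun j _ => by ring

theorem dotProduct_hadamard_mulVec {R : Type*} [CommSemiring R] (A C : Matrix n n R)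
    (z : n → R) : z ⬝ᵥ (A ⊙ C) *ᵥ z = (diagonal z * A * diagonal z * Cᵀ).trace := by
  rw [dotProduct_mulVec, dotProduct_vecMul_hadamard, transpose_mul, diagonal_transpose,
    Matrix.mul_assoc _ (diagonal z)]

theorem trace_commutator_mul_commutator_mul {R : Type*} [CommRing R] {H P : Matrix n n R}
    (hHP : H * P = 1) (hPH : P * H = 1) (Z : Matrix n n R) :
    ((Z * H - H * Z) * P * (H * Z - Z * H) * P).trace
      = 2 * ((Z * H * Z * P).trace - (Z * Z).trace) := by
  have expand : (Z * H - H * Z) * P * (H * Z - Z * H) * P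
      = Z * H * Z * P - Z * Z - H * (Z * Z * P) + H * (Z * P * Z) := by
    calc _ = Z * H * (P * H) * Z * P - Z * (H * P) * Z * (H * P)
          - H * (Z * (P * H) * Z * P) + H * (Z * P * Z) * (H * P) := by noncomm_ring
      _ = _ := by simp only [hHP, hPH, mul_one]
  rw [expand, trace_add, trace_sub, trace_sub, trace_mul_comm H, trace_mul_comm H,
    Matrix.mul_assoc (Z * Z), hPH, mul_one, Matrix.mul_assoc (Z * P), trace_mul_comm (Z * P),
    ← Matrix.mul_assoc]
  ring

open scoped ComplexOrder MatrixOrder in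
theorem PosDef.eq_zero_of_trace_mul_mul_conjTranspose_mul_eq_zero {𝕜 : Type*} [RCLike 𝕜]
    {P X : Matrix n n 𝕜} (hP : P.PosDef) (h : (X * P * Xᴴ * P).trace = 0) : X = 0 := by
  -- with `P = yᴴ y`, the trace is the squared Frobenius norm of `y X yᴴ`
  obtain ⟨y, hy, rfl⟩ :=
    CStarAlgebra.isStrictlyPositive_iff_eq_star_mul_self.mp hP.isStrictlyPositive
  rw [star_eq_conjTranspose] at h
  have hyX : y * X * yᴴ = 0 := by
    rw [← trace_mul_conjTranspose_self_eq_zero_iff, ← h, conjTranspose_mul, conjTranspose_mul,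
      conjTranspose_conjTranspose]
    simp only [Matrix.mul_assoc]
    rw [trace_mul_comm y]
    simp only [Matrix.mul_assoc]
  have hyH : IsUnit yᴴ := by simpa using hy.star
  simpa [hy.mul_right_eq_zero, hyH.mul_left_eq_zero] using hyX

/-- Equality case of Fiedler's inequality `H ⊙ H⁻¹ ⪰ 1`. -/
theorem PosDef.hadamard_inv_mulVec_eq_self_iff {H : Matrix n n ℝ} (hH : H.PosDef) (z : n → ℝ) :
    (H ⊙ H⁻¹) *ᵥ z = z ↔ Commute (diagonal z) H := by
  have hHinv : H⁻¹ᵀ = H⁻¹ := hH.inv.isHermitian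
  have hHt : Hᵀ = H := hH.isHermitian
  have hdet : IsUnit H.det := isUnit_iff_ne_zero.2 hH.det_pos.ne'
  have hHH : H * H⁻¹ = 1 := mul_nonsing_inv H hdet
  constructor
  · intro hz
    have hq : (diagonal z * H * diagonal z * H⁻¹).trace = (diagonal z * diagonal z).trace := by
      rw [← hHinv, ← dotProduct_hadamard_mulVec, hz, diagonal_mul_diagonal, trace_diagonal]
      rfl
    have hcomm := trace_commutator_mul_commutator_mul hHH (nonsing_inv_mul H hdet)
      (diagonal z)
    rw [hq, sub_self, mul_zero] at hcomm
    have hX : (diagonal z * H - H * diagonal z)ᴴ = H * diagonal z - diagonal z * H := by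
      simp [hHt]
    rw [← hX] at hcomm
    exact sub_eq_zero.mp (hH.inv.eq_zero_of_trace_mul_mul_conjTranspose_mul_eq_zero hcomm)
  · intro hz
    ext i
    rw [hadamard_mulVec_apply, hHinv, ← hz.eq, Matrix.mul_assoc, hHH, mul_one, diagonal_apply_eq]

theorem mulVec_eq_zero_iff_diagonal_mul_mul_diagonal {K : Type*} [Field K] (Q : Matrix n n K)
    {w : n → K} (hw : ∀ i, w i ≠ 0) (v : n → K) :
    Q *ᵥ v = 0 ↔ (diagonal w * Q * diagonal w) *ᵥ (v / w) = 0 := by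
  have hv : diagonal w *ᵥ (v / w) = v := by
    ext i; rw [mulVec_diagonal, Pi.div_apply, mul_div_cancel₀ _ (hw i)]
  rw [← mulVec_mulVec, hv, ← mulVec_mulVec]
  constructor
  · intro h; rw [h, mulVec_zero]
  · intro h; ext i
    simpa [mulVec_diagonal, hw i] using congrFun h i

theorem inv_diagonal_inv_add_eq {K : Type*} [Field K] {B M : Matrix n n K} {d : n → K}
    (hB : IsUnit B.det) (hM : IsUnit M.det) (hd : ∀ i, d i ≠ 0)
    (h : M⁻¹ = B⁻¹ + diagonal d) :
    (diagonal d⁻¹ + B)⁻¹ = diagonal d - diagonal d * M * diagonal d := by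
  have hMDB : M * diagonal d * B = B - M := by
    have e : M * M⁻¹ * B = M * (B⁻¹ + diagonal d) * B := by rw [h]
    rw [mul_nonsing_inv M hM, one_mul, Matrix.mul_add, Matrix.add_mul,
      Matrix.mul_assoc M B⁻¹, nonsing_inv_mul B hB, mul_one] at e
    rw [eq_sub_iff_add_eq, add_comm, ← e]
  have hDD : diagonal d * diagonal d⁻¹ = 1 := by
    rw [diagonal_mul_diagonal, ← diagonal_one]
    exact congrArg diagonal (funext fun i => mul_inv_cancel₀ (hd i))
  refine inv_eq_left_inv ?_
  calc (diagonal d - diagonal d * M * diagonal d) * (diagonal d⁻¹ + B)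
      = diagonal d * diagonal d⁻¹ + diagonal d * B - diagonal d * M * (diagonal d * diagonal d⁻¹)
        - diagonal d * (M * diagonal d * B) := by noncomm_ring
    _ = 1 := by rw [hDD, hMDB]; noncomm_ring

theorem diagonal_conj_one_sub_hadamard_eq {K : Type*} [Field K] {B M : Matrix n n K}
    {s w d : n → K} (hB : ∀ i, B i i = 1) (hw : ∀ i, w i = s i * (1 - M i i))
    (hd : ∀ i, d i = s i * w i) (hd0 : ∀ i, d i ≠ 0) :
    diagonal w * (1 - diagonal s * (B ⊙ M) * diagonal s) * diagonal w
      = (diagonal d⁻¹ + B) ⊙ (diagonal d - diagonal d * M * diagonal d) - 1 := by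
  ext i j
  simp only [mul_diagonal, diagonal_mul, hadamard_apply, sub_apply, add_apply, one_apply,
    diagonal_apply, Pi.inv_apply]
  by_cases hij : i = j
  · subst hij
    simp only [if_true, hB]
    field_simp [hd0 i]
    rw [hd, hw]
    ring
  · simp only [hij, if_false]
    rw [hd, hd, hw, hw]
    ring

end Matrix

theorem stmt9_general {L : ℕ} (hL : 0 < L) (lam : Fin L → ℝ) (hlam : ∀ l, 0 < lam l)
    (B : Matrix (Fin L) (Fin L) ℝ) (hB : B.PosDef) (hBdiag : ∀ l, B l l = 1)
    (hIrr : MatrixIrreducible B)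
    (M : Matrix (Fin L) (Fin L) ℝ)
    (hM : M.PosDef) (hBM : (B - M).PosDef)
    (hMDE : M⁻¹ = B⁻¹ + Matrix.diagonal lam - Matrix.diagonal (fun l => lam l * M l l))
    (Q : Matrix (Fin L) (Fin L) ℝ)
    (hQ : Q = (1 : Matrix (Fin L) (Fin L) ℝ)
        - Matrix.diagonal (fun l => Real.sqrt (lam l)) * Matrix.hadamard B M *
            Matrix.diagonal (fun l => Real.sqrt (lam l)))
    (w : Fin L → ℝ) (hw : w = fun l => Real.sqrt (lam l) * (1 - M l l)) :
    w ≠ 0 ∧ ∀ v : Fin L → ℝ, Q *ᵥ v = 0 ↔ ∃ c : ℝ, v = c • w := by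
  have hMdiag (l : Fin L) : 0 < 1 - M l l := by simpa [hBdiag] using hBM.diag_pos (i := l)
  have hw_apply (l : Fin L) : w l = √(lam l) * (1 - M l l) := by rw [hw]
  have hw0 (l : Fin L) : w l ≠ 0 := by
    rw [hw_apply]; exact (mul_pos (Real.sqrt_pos.2 (hlam l)) (hMdiag l)).ne'
  set d : Fin L → ℝ := fun l => lam l * (1 - M l l)
  have hd (l : Fin L) : 0 < d l := mul_pos (hlam l) (hMdiag l)
  have hd_eq (l : Fin L) : d l = √(lam l) * w l := by
    rw [hw_apply, ← mul_assoc, Real.mul_self_sqrt (hlam l).le]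
  have hMDE' : M⁻¹ = B⁻¹ + diagonal d := by
    rw [hMDE, add_sub_assoc, diagonal_sub]
    congr 2 with l
    ring
  set H := diagonal d⁻¹ + B
  have hH : H.PosDef := (PosDef.diagonal fun l => inv_pos.2 (hd l)).add hB
  have hcongr : diagonal w * Q * diagonal w = H ⊙ H⁻¹ - 1 := by
    rw [hQ, inv_diagonal_inv_add_eq (isUnit_iff_ne_zero.2 hB.det_pos.ne')
      (isUnit_iff_ne_zero.2 hM.det_pos.ne') (fun l => (hd l).ne') hMDE']
    exact diagonal_conj_one_sub_hadamard_eq hBdiag hw_apply hd_eq fun l => (hd l).ne'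
  have hker (v : Fin L → ℝ) : Q *ᵥ v = 0 ↔ Commute (diagonal (v / w)) H := by
    rw [mulVec_eq_zero_iff_diagonal_mul_mul_diagonal Q hw0, hcongr, sub_mulVec, one_mulVec,
      sub_eq_zero, hH.hadamard_inv_mulVec_eq_self_iff]
  refine ⟨fun h => hw0 ⟨0, hL⟩ (congrFun h _), fun v => ⟨fun hv => ?_, ?_⟩⟩
  · have hconst := hIrr.eq_of_commute_diagonal (z := v / w) <| by
      simpa [H] using ((hker v).1 hv).sub_right (commute_diagonal (v / w) d⁻¹)
    refine ⟨(v / w) ⟨0, hL⟩, funext fun i => ?_⟩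
    rw [Pi.smul_apply, smul_eq_mul, hconst _ i, Pi.div_apply, div_mul_cancel₀ _ (hw0 i)]
  · rintro ⟨c, rfl⟩
    have hww : w / w = 1 := funext fun l => div_self (hw0 l)
    rw [mulVec_smul, (hker w).2 (by simp [hww]), smul_zero]

/-- assume `B` is irreducible and the real symmetric matrix `M` with
`0 ≺ M ≺ B` solves the matrix Dyson equation at `z = 1`. Then the kernel of
`Q := I − Diag(√λ)(B⊙M)Diag(√λ)` is one-dimensional, spanned by the nonzero vector
`w := √λ ⊙ (𝟙 − diag M)`. -/
theorem stmt9 {L : ℕ} (hL : 0 < L) (lam : Fin L → ℝ) (hlam : ∀ l, 0 < lam l)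
    (B : Matrix (Fin L) (Fin L) ℝ) (hB : B.PosDef) (hBdiag : ∀ l, B l l = 1)
    (hIrr : MatrixIrreducible B)
    (M : Matrix (Fin L) (Fin L) ℝ) (hMsym : Mᵀ = M)
    (hM : M.PosDef) (hBM : (B - M).PosDef)
    (hMDE : M⁻¹ = B⁻¹ + Matrix.diagonal lam - Matrix.diagonal (fun l => lam l * M l l))
    (Q : Matrix (Fin L) (Fin L) ℝ)
    (hQ : Q = (1 : Matrix (Fin L) (Fin L) ℝ)
        - Matrix.diagonal (fun l => Real.sqrt (lam l)) * Matrix.hadamard B M *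
            Matrix.diagonal (fun l => Real.sqrt (lam l)))
    (w : Fin L → ℝ) (hw : w = fun l => Real.sqrt (lam l) * (1 - M l l)) :
    w ≠ 0 ∧ ∀ v : Fin L → ℝ, Q *ᵥ v = 0 ↔ ∃ c : ℝ, v = c • w :=
  stmt9_general hL lam hlam B hB hBdiag hIrr M hM hBM hMDE Q hQ w hw
end

section
/- Let Ψ₁ be a real symmetric positive definite L×L matrix and set Ψ₂ := (Ψ₁^{-1} + I_L)^{-1}. Then the matrix Diag(diag(Ψ₁Ψ₂)) − Ψ₁⊙Ψ₂ is positive semidefinite; equivalently, the Hadamard product Ψ₁⊙Ψ₂ is dominated in the Loewner order by the diagonal matrix whose diagonal is that of the product Ψ₁Ψ₂. -/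
open Matrix

/-!
Write `P = (1 + A)⁻¹`, so that `B = (A⁻¹ + 1)⁻¹ = 1 - P` commutes with `A`. For `D = diag x`
the quadratic form of `Diag(diag(AB)) - A ⊙ B` at `x` is `tr(D²AB) - tr(DADB)`, which equals
`-½ tr([A,D][B,D])` because `A` and `B` commute. Since `[B,D] = P[A,D]P` and `[A,D]` is
antisymmetric, this is `½ tr(([A,D]ᵀ P [A,D]) P)`, the trace of a product of two positive
semidefinite matrices, hence nonnegative.
-/

namespace Matrix

variable {n : Type*} [Fintype n]

theorem trace_commutator_mul_commutator {R : Type*} [CommRing R] {A B : Matrix n n R}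
    (hAB : Commute A B) (D : Matrix n n R) :
    trace ((A * D - D * A) * (B * D - D * B)) =
      2 * (trace (D * A * (D * B)) - trace (D * D * (A * B))) := by
  have h1 : trace (A * D * (B * D)) = trace (D * A * (D * B)) := by
    simpa only [Matrix.mul_assoc] using trace_mul_comm (A * D * B) D
  have h2 : trace (A * D * (D * B)) = trace (D * D * (A * B)) :=
    calc trace (A * D * (D * B)) = trace (B * A * (D * D)) := by
          simpa only [Matrix.mul_assoc] using trace_mul_comm (A * D * D) B
      _ = trace (D * D * (A * B)) := by rw [← hAB.eq, trace_mul_comm]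
  have h3 : trace (D * A * (B * D)) = trace (D * D * (A * B)) := by
    simpa only [Matrix.mul_assoc] using trace_mul_comm (D * A * B) D
  rw [sub_mul, mul_sub, mul_sub, trace_sub, trace_sub, trace_sub, h1, h2, h3]
  ring

variable [DecidableEq n]

open scoped MatrixOrder ComplexOrder in
theorem PosSemidef.trace_mul_nonneg {𝕜 : Type*} [RCLike 𝕜] {A B : Matrix n n 𝕜}
    (hA : A.PosSemidef) (hB : B.PosSemidef) : 0 ≤ trace (A * B) := by
  obtain ⟨R, rfl⟩ := CStarAlgebra.nonneg_iff_eq_star_mul_self.mp hB.nonneg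
  rw [star_eq_conjTranspose, ← Matrix.mul_assoc, trace_mul_comm, ← Matrix.mul_assoc]
  exact (hA.mul_mul_conjTranspose_same R).trace_nonneg

theorem inv_mul_sub_mul_inv {R : Type*} [CommRing R] {B : Matrix n n R} (hB : IsUnit B.det)
    (D : Matrix n n R) : B⁻¹ * D - D * B⁻¹ = B⁻¹ * (D * B - B * D) * B⁻¹ := by
  simp only [Matrix.mul_sub, Matrix.sub_mul, Matrix.mul_assoc, mul_nonsing_inv_cancel_right _ _ hB,
    nonsing_inv_mul_cancel_left _ _ hB]

theorem inv_inv_add_one_eq_one_sub_inv {R : Type*} [CommRing R] {A : Matrix n n R}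
    (hA : IsUnit A.det) (h1A : IsUnit (1 + A).det) : (A⁻¹ + 1)⁻¹ = 1 - (1 + A)⁻¹ := by
  have hfactor : A⁻¹ + 1 = A⁻¹ * (1 + A) := by
    rw [Matrix.mul_add, Matrix.mul_one, nonsing_inv_mul _ hA, add_comm]
  calc (A⁻¹ + 1)⁻¹ = (1 + A)⁻¹ * ((1 + A) - 1) := by
        rw [hfactor, mul_inv_rev, nonsing_inv_nonsing_inv _ hA, add_sub_cancel_left]
    _ = 1 - (1 + A)⁻¹ := by rw [Matrix.mul_sub, nonsing_inv_mul _ h1A, Matrix.mul_one]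

theorem two_mul_dotProduct_diagonal_diag_mul_sub_hadamard_mulVec {R : Type*} [CommRing R]
    {A B : Matrix n n R} (hA : Aᵀ = A) (hB : Bᵀ = B) (hAB : Commute A B) (x : n → R) :
    2 * (x ⬝ᵥ ((diagonal (A * B).diag - A ⊙ B) *ᵥ x)) =
      -trace ((A * diagonal x - diagonal x * A) * (B * diagonal x - diagonal x * B)) := by
  have hdiag : x ⬝ᵥ (diagonal (A * B).diag *ᵥ x) = trace (diagonal x * diagonal x * (A * B)) := by
    rw [← one_hadamard, dotProduct_mulVec, dotProduct_vecMul_hadamard, transpose_mul,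
      transpose_mul, hA, hB, ← hAB.eq, diagonal_transpose, Matrix.mul_one, Matrix.mul_assoc]
  have hhad : x ⬝ᵥ ((A ⊙ B) *ᵥ x) = trace (diagonal x * A * (diagonal x * B)) := by
    rw [dotProduct_mulVec, dotProduct_vecMul_hadamard, transpose_mul, hB, diagonal_transpose]
  rw [sub_mulVec, dotProduct_sub, hdiag, hhad, trace_commutator_mul_commutator hAB]
  ring

theorem commute_one_sub_inv_one_add {R : Type*} [CommRing R] {A : Matrix n n R}
    (h1A : IsUnit (1 + A).det) : Commute A (1 - (1 + A)⁻¹) := by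
  have h : Commute (1 + A) (1 + A)⁻¹ :=
    (mul_nonsing_inv _ h1A).trans (nonsing_inv_mul _ h1A).symm
  have hA : Commute A (1 + A)⁻¹ := by simpa using h.sub_left (Commute.one_left _)
  exact (Commute.one_right A).sub_right hA

theorem one_sub_inv_one_add_mul_sub_mul {R : Type*} [CommRing R] {A : Matrix n n R}
    (h1A : IsUnit (1 + A).det) (D : Matrix n n R) :
    (1 - (1 + A)⁻¹) * D - D * (1 - (1 + A)⁻¹) = (1 + A)⁻¹ * (A * D - D * A) * (1 + A)⁻¹ :=
  calc (1 - (1 + A)⁻¹) * D - D * (1 - (1 + A)⁻¹) = -((1 + A)⁻¹ * D - D * (1 + A)⁻¹) := by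
        noncomm_ring
    _ = (1 + A)⁻¹ * (A * D - D * A) * (1 + A)⁻¹ := by
        rw [inv_mul_sub_mul_inv h1A]; noncomm_ring

theorem posSemidef_diagonal_diag_mul_sub_hadamard_one_sub_inv {A : Matrix n n ℝ}
    (hA : A.IsHermitian) (h1A : (1 + A).PosDef) :
    (diagonal (A * (1 - (1 + A)⁻¹)).diag - A ⊙ (1 - (1 + A)⁻¹)).PosSemidef := by
  have h1A_det : IsUnit (1 + A).det := (isUnit_iff_isUnit_det _).mp h1A.isUnit
  have hP : (1 + A)⁻¹.PosSemidef := h1A.inv.posSemidef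
  have hB : (1 - (1 + A)⁻¹).IsHermitian := isHermitian_one.sub hP.isHermitian
  have hAt : Aᵀ = A := by simpa using hA.eq
  refine posSemidef_iff_dotProduct_mulVec.mpr
    ⟨(isHermitian_diagonal _).sub (hA.hadamard hB), fun x => ?_⟩
  rw [star_trivial, ← mul_nonneg_iff_of_pos_left two_pos,
    two_mul_dotProduct_diagonal_diag_mul_sub_hadamard_mulVec hAt (by simpa using hB.eq)
      (commute_one_sub_inv_one_add h1A_det),
    one_sub_inv_one_add_mul_sub_mul h1A_det]
  set K := A * diagonal x - diagonal x * A
  have hK : Kᵀ = -K := by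
    rw [transpose_sub, transpose_mul, transpose_mul, diagonal_transpose, hAt, neg_sub]
  simpa [hK, Matrix.mul_assoc] using
    (hP.conjTranspose_mul_mul_same K).trace_mul_nonneg hP

end Matrix

theorem stmt10_general {L : ℕ}
    (Ψ₁ : Matrix (Fin L) (Fin L) ℝ) (hΨ₁ : Ψ₁.PosDef)
    (Ψ₂ : Matrix (Fin L) (Fin L) ℝ)
    (hΨ₂ : Ψ₂ = (Ψ₁⁻¹ + 1)⁻¹) :
    (Matrix.diagonal (Matrix.diag (Ψ₁ * Ψ₂)) - Matrix.hadamard Ψ₁ Ψ₂).PosSemidef := by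
  have h1Ψ₁ : (1 + Ψ₁).PosDef := PosDef.one.add hΨ₁
  rw [hΨ₂, inv_inv_add_one_eq_one_sub_inv ((isUnit_iff_isUnit_det _).mp hΨ₁.isUnit)
    ((isUnit_iff_isUnit_det _).mp h1Ψ₁.isUnit)]
  exact posSemidef_diagonal_diag_mul_sub_hadamard_one_sub_inv hΨ₁.isHermitian h1Ψ₁

/-- for a real symmetric positive definite `Ψ₁` and
`Ψ₂ := (Ψ₁⁻¹ + I)⁻¹`, the matrix `Diag(diag(Ψ₁Ψ₂)) − Ψ₁⊙Ψ₂` is positive semidefinite;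
i.e. the Hadamard product `Ψ₁⊙Ψ₂` is dominated in the Loewner order by the diagonal
matrix whose diagonal is that of `Ψ₁Ψ₂`. -/
theorem stmt10 {L : ℕ} (hL : 0 < L)
    (Ψ₁ : Matrix (Fin L) (Fin L) ℝ) (hΨ₁ : Ψ₁.PosDef)
    (Ψ₂ : Matrix (Fin L) (Fin L) ℝ)
    (hΨ₂ : Ψ₂ = (Ψ₁⁻¹ + 1)⁻¹) :
    (Matrix.diagonal (Matrix.diag (Ψ₁ * Ψ₂)) - Matrix.hadamard Ψ₁ Ψ₂).PosSemidef :=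
  stmt10_general Ψ₁ hΨ₁ Ψ₂ hΨ₂
end

section
/- Let M be a real symmetric positive definite L×L matrix solving the matrix Dyson equation at z = 1, i.e. M^{-1} = B^{-1} + Λ − Diag(λ⊙diag(M)), and let V := B^{1/2} be the positive definite square root of B. Let T ∈ ℝ^{L×L} be symmetric and let Δ ∈ ℝ^{L×L} be a symmetric matrix satisfying M^{-1}ΔM^{-1} = V^{-1}TV^{-1} + Diag(λ⊙diag(Δ)). Then, with w := √λ ⊙ (𝟙_L − diag(M)), the identity wᵀ·[(Diag(√λ)·B·Diag(√λ)) ⊙ Δ]·w = tr(T·(I_L − V^{-1}MV^{-1})) holds. -/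
/-!
Write `E := Diag(λ ⊙ (𝟙 − diag M))`, so that the Dyson equation reads `M⁻¹ = B⁻¹ + E`, and
`X := V⁻¹ T V⁻¹ = M⁻¹ Δ M⁻¹ − Diag(λ ⊙ diag Δ)`. Cyclicity of the trace and `V² = B` give
`tr(T (I − V⁻¹ M V⁻¹)) = tr(X (B − M))`. Since `B − M = B E M` and `M⁻¹ B = I + E B`, the first
part of `X` contributes `tr(Δ E) + tr(Δ E B E)`, while the diagonal part contributes exactly
`tr(Δ E)` because `B` has unit diagonal. What remains, `tr(Δ E B E)`, is the Hadamard quadratic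
form on the left, since `E = Diag(√λ ⊙ w)`.
-/

open Matrix
open scoped MatrixOrder

namespace Matrix

variable {n R : Type*} [Fintype n] [DecidableEq n]

theorem IsHermitian.eigenvectorUnitary_mul_diagonal_sqrt_mul_star_eq_cfc {A : Matrix n n ℝ}
    (hA : A.IsHermitian) :
    hA.eigenvectorUnitary.1 * diagonal ((↑) ∘ (√·) ∘ hA.eigenvalues) *
      (star hA.eigenvectorUnitary : Matrix n n ℝ) = cfc Real.sqrt A := by
  rw [hA.cfc_eq, IsHermitian.cfc, Unitary.conjStarAlgAut_apply]
  rfl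

theorem PosSemidef.cfc_sqrt_mul_self {A : Matrix n n ℝ} (hA : A.PosSemidef) :
    cfc Real.sqrt A * cfc Real.sqrt A = A := by
  rw [← cfc_mul ..]
  conv_rhs => rw [← cfc_id' ℝ A hA.1]
  exact cfc_congr fun x hx => Real.mul_self_sqrt (spectrum_nonneg_of_nonneg hA.nonneg hx)

theorem trace_diagonal_mul [NonUnitalNonAssocSemiring R] (d : n → R) (A : Matrix n n R) :
    trace (diagonal d * A) = ∑ i, d i * A i i := by
  simp [trace, diagonal_mul]

section CommRing

variable [CommRing R]

theorem trace_mul_one_sub_inv_mul_mul_inv {V : Matrix n n R} (hV : IsUnit V.det)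
    (T M : Matrix n n R) :
    trace (T * (1 - V⁻¹ * M * V⁻¹)) = trace (V⁻¹ * T * V⁻¹ * (V * V - M)) := by
  have hT : trace (V⁻¹ * T * V⁻¹ * (V * V)) = trace T := by
    rw [← Matrix.mul_assoc, nonsing_inv_mul_cancel_right V _ hV, trace_mul_comm,
      mul_nonsing_inv_cancel_left V _ hV]
  have hTM : trace (V⁻¹ * T * V⁻¹ * M) = trace (T * (V⁻¹ * M * V⁻¹)) := by
    rw [Matrix.mul_assoc (V⁻¹ * T), Matrix.mul_assoc V⁻¹, trace_mul_comm V⁻¹]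
    simp only [Matrix.mul_assoc]
  rw [Matrix.mul_sub, Matrix.mul_one, trace_sub, Matrix.mul_sub, trace_sub, hT, hTM]

theorem trace_inv_mul_mul_inv_mul_sub {M B E : Matrix n n R} (hM : IsUnit M.det)
    (hB : IsUnit B.det) (h : M⁻¹ = B⁻¹ + E) (Δ : Matrix n n R) :
    trace (M⁻¹ * Δ * M⁻¹ * (B - M)) = trace (Δ * E) + trace (Δ * E * B * E) := by
  have hBM : B - M = B * E * M := by
    have : B * M⁻¹ * M = M + B * E * M := by
      rw [h, Matrix.mul_add, mul_nonsing_inv B hB, Matrix.add_mul, Matrix.one_mul]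
    rw [nonsing_inv_mul_cancel_right M _ hM] at this
    exact sub_eq_iff_eq_add'.mpr this
  have hMB : M⁻¹ * B = 1 + E * B := by
    rw [h, Matrix.add_mul, nonsing_inv_mul B hB]
  calc trace (M⁻¹ * Δ * M⁻¹ * (B - M))
      = trace (M⁻¹ * Δ * M⁻¹ * B * E * M) := by
        rw [hBM]
        simp only [Matrix.mul_assoc]
    _ = trace (M * (M⁻¹ * (Δ * (M⁻¹ * B) * E))) := by
        rw [trace_mul_comm]
        simp only [Matrix.mul_assoc]
    _ = trace (Δ * E) + trace (Δ * E * B * E) := by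
        rw [mul_nonsing_inv_cancel_left M _ hM, hMB, Matrix.mul_add, Matrix.mul_one,
          Matrix.add_mul, trace_add]
        simp only [Matrix.mul_assoc]

end CommRing

theorem dotProduct_mulVec_diagonal_mul_mul_diagonal_hadamard [CommSemiring R] (a w : n → R) (B Δ : Matrix n n R) :
    w ⬝ᵥ (hadamard (diagonal a * B * diagonal a) Δ *ᵥ w)
      = trace (diagonal (a * w) * B * diagonal (a * w) * Δᵀ) := by
  have hwa : diagonal (a * w) = diagonal w * diagonal a := by
    rw [diagonal_mul_diagonal, mul_comm a w]; rfl
  have haw : diagonal (a * w) = diagonal a * diagonal w := by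
    rw [diagonal_mul_diagonal]; rfl
  rw [dotProduct_mulVec, dotProduct_vecMul_hadamard, transpose_mul, diagonal_transpose]
  nth_rw 1 [hwa]
  rw [haw]
  simp only [Matrix.mul_assoc]

end Matrix

theorem stmt12_general {L : ℕ} (lam : Fin L → ℝ) (hlam : ∀ l, 0 < lam l)
    (B : Matrix (Fin L) (Fin L) ℝ) (hB : B.PosDef) (hBdiag : ∀ l, B l l = 1)
    (M : Matrix (Fin L) (Fin L) ℝ) (hM : M.PosDef)
    (hMDE : M⁻¹ = B⁻¹ + Matrix.diagonal lam - Matrix.diagonal (fun l => lam l * M l l))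
    (V : Matrix (Fin L) (Fin L) ℝ) (hV : V = hB.posSemidef.1.eigenvectorUnitary.1 *
      Matrix.diagonal ((↑) ∘ (√·) ∘ hB.posSemidef.1.eigenvalues) *
      (star hB.posSemidef.1.eigenvectorUnitary : Matrix (Fin L) (Fin L) ℝ))
    (T Δ : Matrix (Fin L) (Fin L) ℝ) (hΔ : Δᵀ = Δ)
    (hEq : M⁻¹ * Δ * M⁻¹
        = V⁻¹ * T * V⁻¹ + Matrix.diagonal (fun l => lam l * Δ l l))
    (w : Fin L → ℝ) (hw : w = fun l => Real.sqrt (lam l) * (1 - M l l)) :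
    w ⬝ᵥ ((Matrix.hadamard
          (Matrix.diagonal (fun l => Real.sqrt (lam l)) * B *
            Matrix.diagonal (fun l => Real.sqrt (lam l))) Δ) *ᵥ w)
      = Matrix.trace (T * (1 - V⁻¹ * M * V⁻¹)) := by
  set E := diagonal fun l => lam l * (1 - M l l)
  have hBdet : IsUnit B.det := hB.det_pos.ne'.isUnit
  have hMdet : IsUnit M.det := hM.det_pos.ne'.isUnit
  have hVV : V * V = B := by
    rw [hV, hB.posSemidef.1.eigenvectorUnitary_mul_diagonal_sqrt_mul_star_eq_cfc]
    exact hB.posSemidef.cfc_sqrt_mul_self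
  have hVdet : IsUnit V.det := isUnit_of_mul_isUnit_left (by rwa [← det_mul, hVV])
  have hMinv : M⁻¹ = B⁻¹ + E := by
    rw [hMDE, add_sub_assoc, diagonal_sub]
    congr; ext l; ring
  have hX : V⁻¹ * T * V⁻¹ = M⁻¹ * Δ * M⁻¹ - diagonal (fun l => lam l * Δ l l) := by
    rw [hEq, add_sub_cancel_right]
  have hDiag : trace (diagonal (fun l => lam l * Δ l l) * (B - M)) = trace (Δ * E) := by
    rw [trace_mul_comm Δ, trace_diagonal_mul, trace_diagonal_mul]
    refine Finset.sum_congr rfl fun l _ => ?_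
    rw [Matrix.sub_apply, hBdiag]
    ring
  have hSqrtW : (fun l => √(lam l)) * w = fun l => lam l * (1 - M l l) := by
    ext l
    rw [hw, Pi.mul_apply, ← mul_assoc, Real.mul_self_sqrt (hlam l).le]
  rw [dotProduct_mulVec_diagonal_mul_mul_diagonal_hadamard, hSqrtW, hΔ,
    trace_mul_one_sub_inv_mul_mul_inv hVdet, hVV, hX, sub_mul, trace_sub,
    trace_inv_mul_mul_inv_mul_sub hMdet hBdet hMinv, hDiag, add_sub_cancel_left, trace_mul_comm]
  simp only [Matrix.mul_assoc, E]

/-- let the real symmetric positive definite matrix `M` solve the matrix Dyson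
equation at `z = 1`, `V := B^{1/2}`, and let `T, Δ` be symmetric with
`M⁻¹ Δ M⁻¹ = V⁻¹ T V⁻¹ + Diag(λ ⊙ diag Δ)`. Then, with `w := √λ ⊙ (𝟙 − diag M)`,
`wᵀ [(Diag(√λ) B Diag(√λ)) ⊙ Δ] w = tr(T (I − V⁻¹ M V⁻¹))`. -/
theorem stmt12 {L : ℕ} (hL : 0 < L) (lam : Fin L → ℝ) (hlam : ∀ l, 0 < lam l)
    (B : Matrix (Fin L) (Fin L) ℝ) (hB : B.PosDef) (hBdiag : ∀ l, B l l = 1)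
    (M : Matrix (Fin L) (Fin L) ℝ) (hMsym : Mᵀ = M) (hM : M.PosDef)
    (hMDE : M⁻¹ = B⁻¹ + Matrix.diagonal lam - Matrix.diagonal (fun l => lam l * M l l))
    (V : Matrix (Fin L) (Fin L) ℝ) (hV : V = hB.posSemidef.1.eigenvectorUnitary.1 *
      Matrix.diagonal ((↑) ∘ (√·) ∘ hB.posSemidef.1.eigenvalues) *
      (star hB.posSemidef.1.eigenvectorUnitary : Matrix (Fin L) (Fin L) ℝ))
    (T Δ : Matrix (Fin L) (Fin L) ℝ) (hT : Tᵀ = T) (hΔ : Δᵀ = Δ)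
    (hEq : M⁻¹ * Δ * M⁻¹
        = V⁻¹ * T * V⁻¹ + Matrix.diagonal (fun l => lam l * Δ l l))
    (w : Fin L → ℝ) (hw : w = fun l => Real.sqrt (lam l) * (1 - M l l)) :
    w ⬝ᵥ ((Matrix.hadamard
          (Matrix.diagonal (fun l => Real.sqrt (lam l)) * B *
            Matrix.diagonal (fun l => Real.sqrt (lam l))) Δ) *ᵥ w)
      = Matrix.trace (T * (1 - V⁻¹ * M * V⁻¹)) :=
  stmt12_general lam hlam B hB hBdiag M hM hMDE V hV T Δ hΔ hEq w hw
end

section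
/- Let B and M be real symmetric L×L matrices and let λ ∈ ℝ^L have nonnegative entries. Then the spectral radius of Diag(√λ)(B⊙M)Diag(√λ) is at most the square root of the product of the spectral radius of Diag(√λ)(B⊙B)Diag(√λ) and the spectral radius of Diag(√λ)(M⊙M)Diag(√λ). -/
/-!
Write `C`, `P`, `Q` for the three sandwiched matrices. Entrywise `C i j ^ 2 = P i j * Q i j`
with `P, Q ≥ 0`, so for an eigenvector `v` of `C` with eigenvalue `z` and `y = |v|`,
Cauchy–Schwarz gives `|z| ‖v‖² = |v* C v| ≤ √(yᵀ P y) √(yᵀ Q y)`. Since `P` and `Q` are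
symmetric, their spectral radii are their `ℓ²` operator norms (C*-identity), which bound
`yᵀ P y ≤ ρ(P) ‖y‖²` and `yᵀ Q y ≤ ρ(Q) ‖y‖²`.
-/

open Matrix
open scoped ENNReal

/-- The spectral radius of a real square matrix: the supremum of the norms of its complex
eigenvalues, i.e. the spectral radius of the matrix viewed over `ℂ`. -/
noncomputable def matSpecRad {L : ℕ} (A : Matrix (Fin L) (Fin L) ℝ) : ℝ≥0∞ :=
  spectralRadius ℂ (A.map (fun x : ℝ => (x : ℂ)))

open scoped Matrix.Norms.L2Operator ComplexOrder

namespace Matrix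

variable {n : Type*} [Fintype n]

theorem exists_mulVec_eq_smul_of_mem_spectrum {K : Type*} [Field K] [DecidableEq n]
    {A : Matrix n n K} {z : K} (hz : z ∈ spectrum K A) : ∃ v ≠ 0, A *ᵥ v = z • v := by
  rw [spectrum.mem_iff, isUnit_iff_isUnit_det, isUnit_iff_ne_zero, not_not,
    ← exists_mulVec_eq_zero_iff] at hz
  obtain ⟨v, hv, hzv⟩ := hz
  refine ⟨v, hv, ?_⟩
  rw [sub_mulVec, Algebra.algebraMap_eq_smul_one, smul_mulVec, one_mulVec, sub_eq_zero] at hzv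
  exact hzv.symm

theorem norm_star_dotProduct_mulVec_le_sum {𝕜 : Type*} [RCLike 𝕜] (A : Matrix n n 𝕜)
    (v : n → 𝕜) : ‖star v ⬝ᵥ (A *ᵥ v)‖ ≤ ∑ i, ∑ j, ‖v i‖ * ‖A i j‖ * ‖v j‖ := by
  refine (norm_sum_le _ _).trans (Finset.sum_le_sum fun i _ => ?_)
  rw [norm_mul, Pi.star_apply, norm_star, mulVec, dotProduct]
  refine (mul_le_mul_of_nonneg_left (norm_sum_le _ _) (norm_nonneg _)).trans ?_
  simp only [Finset.mul_sum, norm_mul, mul_assoc, le_refl]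

theorem norm_star_dotProduct_mulVec_le_l2_opNorm {𝕜 : Type*} [RCLike 𝕜] [DecidableEq n]
    (A : Matrix n n 𝕜) (v : n → 𝕜) : ‖star v ⬝ᵥ (A *ᵥ v)‖ ≤ ‖A‖ * ∑ i, ‖v i‖ ^ 2 := by
  have hinner : star v ⬝ᵥ (A *ᵥ v) = inner 𝕜 (WithLp.toLp 2 v) (WithLp.toLp 2 (A *ᵥ v)) := by
    rw [EuclideanSpace.inner_toLp_toLp, dotProduct_comm]
  calc ‖star v ⬝ᵥ (A *ᵥ v)‖ ≤ ‖WithLp.toLp 2 v‖ * ‖WithLp.toLp 2 (A *ᵥ v)‖ :=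
        hinner ▸ norm_inner_le_norm _ _
    _ ≤ ‖WithLp.toLp 2 v‖ * (‖A‖ * ‖WithLp.toLp 2 v‖) :=
        mul_le_mul_of_nonneg_left (l2_opNorm_mulVec A _) (norm_nonneg _)
    _ = ‖A‖ * ∑ i, ‖v i‖ ^ 2 := by
        rw [mul_left_comm, ← sq, EuclideanSpace.norm_sq_eq]

theorem sum_mul_mul_le_l2_opNorm_map_ofReal [DecidableEq n] (P : Matrix n n ℝ) (y : n → ℝ) :
    ∑ i, ∑ j, y i * P i j * y j ≤ ‖P.map ((↑) : ℝ → ℂ)‖ * ∑ i, y i ^ 2 := by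
  have h := norm_star_dotProduct_mulVec_le_l2_opNorm (P.map ((↑) : ℝ → ℂ)) (fun i => (y i : ℂ))
  have hform : star (fun i => (y i : ℂ)) ⬝ᵥ (P.map (↑) *ᵥ fun i => (y i : ℂ)) =
      ((∑ i, ∑ j, y i * P i j * y j : ℝ) : ℂ) := by
    simp [dotProduct, mulVec, Finset.mul_sum, mul_assoc]
  rw [hform, Complex.norm_real] at h
  simpa using (le_abs_self _).trans h

theorem sum_mul_abs_mul_le_sqrt_mul_sqrt {C P Q : Matrix n n ℝ} (hP : ∀ i j, 0 ≤ P i j)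
    (hQ : ∀ i j, 0 ≤ Q i j) (hC : ∀ i j, C i j ^ 2 ≤ P i j * Q i j) {y : n → ℝ}
    (hy : ∀ i, 0 ≤ y i) :
    ∑ i, ∑ j, y i * |C i j| * y j ≤
      √(∑ i, ∑ j, y i * P i j * y j) * √(∑ i, ∑ j, y i * Q i j * y j) := by
  have hPy (i j : n) : 0 ≤ y i * P i j * y j := mul_nonneg (mul_nonneg (hy i) (hP i j)) (hy j)
  have hQy (i j : n) : 0 ≤ y i * Q i j * y j := mul_nonneg (mul_nonneg (hy i) (hQ i j)) (hy j)
  have hentry (i j : n) :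
      y i * |C i j| * y j ≤ √(y i * P i j * y j) * √(y i * Q i j * y j) := by
    rw [← Real.sqrt_mul (hPy i j),
      Real.le_sqrt (mul_nonneg (mul_nonneg (hy i) (abs_nonneg _)) (hy j))
        (mul_nonneg (hPy i j) (hQy i j))]
    calc (y i * |C i j| * y j) ^ 2 = (y i * y j) ^ 2 * C i j ^ 2 := by
          rw [← sq_abs (C i j)]; ring
      _ ≤ (y i * y j) ^ 2 * (P i j * Q i j) := by gcongr; exact hC i j
      _ = y i * P i j * y j * (y i * Q i j * y j) := by ring
  simp only [← Finset.sum_product']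
  exact (Finset.sum_le_sum fun p _ => hentry p.1 p.2).trans
    (Real.sum_sqrt_mul_sqrt_le _ (fun p => hPy p.1 p.2) (fun p => hQy p.1 p.2))

theorem norm_le_sqrt_of_mem_spectrum_map_ofReal [DecidableEq n] {C P Q : Matrix n n ℝ}
    (hP : ∀ i j, 0 ≤ P i j) (hQ : ∀ i j, 0 ≤ Q i j) (hC : ∀ i j, C i j ^ 2 ≤ P i j * Q i j)
    {z : ℂ} (hz : z ∈ spectrum ℂ (C.map ((↑) : ℝ → ℂ))) :
    ‖z‖ ≤ √(‖P.map ((↑) : ℝ → ℂ)‖ * ‖Q.map ((↑) : ℝ → ℂ)‖) := by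
  obtain ⟨v, hv, hCv⟩ := exists_mulVec_eq_smul_of_mem_spectrum hz
  set y : n → ℝ := fun i => ‖v i‖
  set N := ∑ i, y i ^ 2
  have hstar : star v ⬝ᵥ v = (N : ℂ) := by
    simp [N, y, dotProduct, RCLike.star_def, RCLike.conj_mul]
  have hN : 0 < N := by
    have := (dotProduct_star_self_pos_iff (v := v)).2 hv
    rw [hstar] at this
    exact_mod_cast this
  refine le_of_mul_le_mul_right ?_ hN
  calc ‖z‖ * N = ‖star v ⬝ᵥ (C.map (↑) *ᵥ v)‖ := by
        rw [hCv, dotProduct_smul, hstar, smul_eq_mul, norm_mul, Complex.norm_real,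
          Real.norm_of_nonneg hN.le]
    _ ≤ ∑ i, ∑ j, y i * |C i j| * y j := by
        simpa using norm_star_dotProduct_mulVec_le_sum (C.map (↑)) v
    _ ≤ √(∑ i, ∑ j, y i * P i j * y j) * √(∑ i, ∑ j, y i * Q i j * y j) :=
        sum_mul_abs_mul_le_sqrt_mul_sqrt hP hQ hC fun i => norm_nonneg _
    _ ≤ √(‖P.map ((↑) : ℝ → ℂ)‖ * N) * √(‖Q.map ((↑) : ℝ → ℂ)‖ * N) := by
        gcongr <;> exact sum_mul_mul_le_l2_opNorm_map_ofReal _ y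
    _ = √(‖P.map ((↑) : ℝ → ℂ)‖ * ‖Q.map ((↑) : ℝ → ℂ)‖) * N := by
        rw [← Real.sqrt_mul (by positivity), mul_mul_mul_comm, ← sq N,
          Real.sqrt_mul (by positivity), Real.sqrt_sq hN.le]

end Matrix

theorem matSpecRad_eq_nnnorm_of_transpose_eq {L : ℕ} {P : Matrix (Fin L) (Fin L) ℝ}
    (hP : Pᵀ = P) : matSpecRad P = ‖P.map ((↑) : ℝ → ℂ)‖₊ :=
  IsSelfAdjoint.spectralRadius_eq_nnnorm <|
    IsHermitian.map (by rwa [IsHermitian, conjTranspose_eq_transpose_of_trivial]) _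
      fun x => by simp

theorem matSpecRad_le_rpow_of_sq_le_mul {L : ℕ} {C P Q : Matrix (Fin L) (Fin L) ℝ}
    (hP : ∀ i j, 0 ≤ P i j) (hQ : ∀ i j, 0 ≤ Q i j) (hC : ∀ i j, C i j ^ 2 ≤ P i j * Q i j)
    (hPt : Pᵀ = P) (hQt : Qᵀ = Q) :
    matSpecRad C ≤ (matSpecRad P * matSpecRad Q) ^ (1 / 2 : ℝ) := by
  rw [matSpecRad_eq_nnnorm_of_transpose_eq hPt, matSpecRad_eq_nnnorm_of_transpose_eq hQt,
    ← ENNReal.coe_mul, ← ENNReal.coe_rpow_of_nonneg _ (by norm_num), ← NNReal.sqrt_eq_rpow]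
  refine iSup₂_le fun z hz => ENNReal.coe_le_coe.2 ?_
  rw [← NNReal.coe_le_coe]
  simpa using norm_le_sqrt_of_mem_spectrum_map_ofReal hP hQ hC hz

theorem stmt14_general {L : ℕ} (lam : Fin L → ℝ)
    (B M : Matrix (Fin L) (Fin L) ℝ) (hB : Bᵀ = B) (hM : Mᵀ = M) :
    matSpecRad (Matrix.diagonal (fun l => Real.sqrt (lam l)) * Matrix.hadamard B M *
        Matrix.diagonal (fun l => Real.sqrt (lam l)))
      ≤ (matSpecRad (Matrix.diagonal (fun l => Real.sqrt (lam l)) * Matrix.hadamard B B *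
            Matrix.diagonal (fun l => Real.sqrt (lam l))) *
          matSpecRad (Matrix.diagonal (fun l => Real.sqrt (lam l)) * Matrix.hadamard M M *
            Matrix.diagonal (fun l => Real.sqrt (lam l)))) ^ (1 / 2 : ℝ) := by
  set D := diagonal fun l => √(lam l)
  have hentry (X Y : Matrix (Fin L) (Fin L) ℝ) (i j : Fin L) :
      (D * hadamard X Y * D) i j = √(lam i) * (X i j * Y i j) * √(lam j) := by
    simp [D, mul_diagonal, diagonal_mul, hadamard_apply]
  have hsymm (X : Matrix (Fin L) (Fin L) ℝ) (hX : Xᵀ = X) :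
      (D * hadamard X X * D)ᵀ = D * hadamard X X * D := by
    rw [transpose_mul, transpose_mul, diagonal_transpose, transpose_hadamard, hX, mul_assoc]
  have hnonneg (X : Matrix (Fin L) (Fin L) ℝ) (i j : Fin L) :
      0 ≤ (D * hadamard X X * D) i j := by
    rw [hentry]
    exact mul_nonneg (mul_nonneg (Real.sqrt_nonneg _) (mul_self_nonneg _)) (Real.sqrt_nonneg _)
  refine matSpecRad_le_rpow_of_sq_le_mul (hnonneg B) (hnonneg M) (fun i j => le_of_eq ?_)
    (hsymm B hB) (hsymm M hM)
  simp only [hentry]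
  ring

/-- for real symmetric `B`, `M` and entrywise nonnegative `λ`,
the spectral radius of `Diag(√λ)(B⊙M)Diag(√λ)` is at most the square root of the product
of the spectral radii of `Diag(√λ)(B⊙B)Diag(√λ)` and `Diag(√λ)(M⊙M)Diag(√λ)`. -/
theorem stmt14 {L : ℕ} (hL : 0 < L) (lam : Fin L → ℝ) (hlam : ∀ l, 0 ≤ lam l)
    (B M : Matrix (Fin L) (Fin L) ℝ) (hB : Bᵀ = B) (hM : Mᵀ = M) :
    matSpecRad (Matrix.diagonal (fun l => Real.sqrt (lam l)) * Matrix.hadamard B M *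
        Matrix.diagonal (fun l => Real.sqrt (lam l)))
      ≤ (matSpecRad (Matrix.diagonal (fun l => Real.sqrt (lam l)) * Matrix.hadamard B B *
            Matrix.diagonal (fun l => Real.sqrt (lam l))) *
          matSpecRad (Matrix.diagonal (fun l => Real.sqrt (lam l)) * Matrix.hadamard M M *
            Matrix.diagonal (fun l => Real.sqrt (lam l)))) ^ (1 / 2 : ℝ) :=
  stmt14_general lam B M hB hM
end

section
/- Let M ∈ Sym_L(ℂ) be invertible and let λ ∈ ℝ^L. Suppose the L×L matrix I_L − (M⊙M)·Diag(λ) is invertible. Then the stability operator 𝓛[R] := R − M·Diag(λ⊙diag(R))·M is a linear bijection of Sym_L(ℂ) onto itself; moreover, if 𝓛[R] = Δ, then diag(R) = (I_L − (M⊙M)Diag(λ))^{-1}·diag(Δ). -/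
open Matrix

/-- let `M` be complex symmetric and invertible, `λ ∈ ℝ^L`, and suppose
`I − (M⊙M)Diag(λ)` is invertible. Then the stability operator
`𝓛[R] = R − M·Diag(λ⊙diag R)·M` is a linear bijection of the complex symmetric matrices
onto themselves, and if `𝓛[R] = Δ` then
`diag R = (I − (M⊙M)Diag(λ))⁻¹ diag Δ`. -/
theorem stmt17 {L : ℕ} (hL : 0 < L) (lam : Fin L → ℝ)
    (M : Matrix (Fin L) (Fin L) ℂ) (hMsym : Mᵀ = M) (hMinv : IsUnit M.det)
    (hstab : IsUnit ((1 : Matrix (Fin L) (Fin L) ℂ)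
        - Matrix.hadamard M M * Matrix.diagonal (fun l => (lam l : ℂ))).det)
    (𝓛 : Matrix (Fin L) (Fin L) ℂ → Matrix (Fin L) (Fin L) ℂ)
    (h𝓛 : 𝓛 = fun R => R - M * Matrix.diagonal (fun l => (lam l : ℂ) * R l l) * M) :
    (∀ (a : ℂ) (R S : Matrix (Fin L) (Fin L) ℂ), 𝓛 (a • R + S) = a • 𝓛 R + 𝓛 S) ∧
    Set.BijOn 𝓛 {R : Matrix (Fin L) (Fin L) ℂ | Rᵀ = R}
      {R : Matrix (Fin L) (Fin L) ℂ | Rᵀ = R} ∧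
    ∀ R Δ : Matrix (Fin L) (Fin L) ℂ, Rᵀ = R → 𝓛 R = Δ →
      Matrix.diag R
        = ((1 : Matrix (Fin L) (Fin L) ℂ)
            - Matrix.hadamard M M * Matrix.diagonal (fun l => (lam l : ℂ)))⁻¹ *ᵥ
          Matrix.diag Δ := by
  set A : Matrix (Fin L) (Fin L) ℂ :=
    Matrix.hadamard M M * Matrix.diagonal (fun l => (lam l : ℂ)) with hA
  have hMsymm : ∀ i j, M j i = M i j := by
    intro i j
    conv_lhs => rw [← hMsym]
    rfl
  -- diagonal of M * Diag(λ ⊙ v) * M is A *ᵥ v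
  have hdiagMDM : ∀ (v : Fin L → ℂ) (l : Fin L),
      (M * Matrix.diagonal (fun j => (lam j : ℂ) * v j) * M) l l = (A *ᵥ v) l := by
    intro v l
    rw [Matrix.mul_apply]
    simp only [Matrix.mul_diagonal, Matrix.mulVec, dotProduct, hA, Matrix.mul_apply,
      Matrix.diagonal_apply, Matrix.hadamard_apply]
    refine Finset.sum_congr rfl fun j _ => ?_
    rw [Finset.sum_eq_single j (by intro b _ hb; simp [hb]) (by simp)]
    simp [hMsymm l j]
    ring
  have key : ∀ R : Matrix (Fin L) (Fin L) ℂ,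
      Matrix.diag (𝓛 R) = (1 - A) *ᵥ Matrix.diag R := by
    intro R
    funext l
    simp only [h𝓛, Matrix.diag, Matrix.sub_apply, Matrix.sub_mulVec, Matrix.one_mulVec]
    rw [hdiagMDM (fun j => R j j) l]
    rfl
  have key2 : ∀ R : Matrix (Fin L) (Fin L) ℂ,
      Matrix.diag R = (1 - A)⁻¹ *ᵥ Matrix.diag (𝓛 R) := by
    intro R
    rw [key, Matrix.mulVec_mulVec, Matrix.nonsing_inv_mul _ hstab, Matrix.one_mulVec]
  -- linearity
  have hlin : ∀ (a : ℂ) (R S : Matrix (Fin L) (Fin L) ℂ),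
      𝓛 (a • R + S) = a • 𝓛 R + 𝓛 S := by
    intro a R S
    simp only [h𝓛]
    have hD : Matrix.diagonal (fun l => (lam l : ℂ) * (a • R + S) l l)
        = a • Matrix.diagonal (fun l => (lam l : ℂ) * R l l)
          + Matrix.diagonal (fun l => (lam l : ℂ) * S l l) := by
      ext i j
      rcases eq_or_ne i j with rfl | h
      · simp [Matrix.diagonal_apply_eq, Matrix.add_apply, Matrix.smul_apply]
        ring
      · simp [Matrix.diagonal_apply_ne _ h]
    rw [hD]
    simp only [Matrix.mul_add, Matrix.add_mul, Matrix.mul_smul, Matrix.smul_mul, smul_add,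
      smul_sub]
    abel
  -- recovering R from 𝓛 R and diag R
  have hrec : ∀ R : Matrix (Fin L) (Fin L) ℂ,
      R = 𝓛 R + M * Matrix.diagonal (fun l => (lam l : ℂ) * R l l) * M := by
    intro R; simp [h𝓛]
  refine ⟨hlin, ⟨?_, ?_, ?_⟩, ?_⟩
  · -- maps to
    intro R hR
    simp only [Set.mem_setOf_eq] at hR ⊢
    simp only [h𝓛, Matrix.transpose_sub, hR, Matrix.transpose_mul, Matrix.diagonal_transpose,
      hMsym]
    rw [Matrix.mul_assoc]
  · -- injective
    intro R _ S _ hRS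
    have hdiag : Matrix.diag R = Matrix.diag S := by
      rw [key2 R, hRS]; exact (key2 S).symm
    have hfun : (fun l => (lam l : ℂ) * R l l) = fun l => (lam l : ℂ) * S l l := by
      funext l
      rw [show R l l = S l l from congrFun hdiag l]
    rw [hrec R, hrec S, hRS, hfun]
  · -- surjective
    intro Δ hΔ
    simp only [Set.mem_setOf_eq] at hΔ
    set d : Fin L → ℂ := (1 - A)⁻¹ *ᵥ Matrix.diag Δ with hd
    have hdeq : ∀ l, d l = Matrix.diag Δ l + (A *ᵥ d) l := by
      intro l
      have : (1 - A) *ᵥ d = Matrix.diag Δ := by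
        rw [hd, Matrix.mulVec_mulVec, Matrix.mul_nonsing_inv _ hstab, Matrix.one_mulVec]
      have h2 := congrFun this l
      simp only [Matrix.sub_mulVec, Matrix.one_mulVec, Pi.sub_apply] at h2
      linear_combination h2
    refine ⟨Δ + M * Matrix.diagonal (fun l => (lam l : ℂ) * d l) * M, ?_, ?_⟩
    · simp only [Set.mem_setOf_eq, Matrix.transpose_add, hΔ, Matrix.transpose_mul,
        Matrix.diagonal_transpose, hMsym]
      rw [Matrix.mul_assoc]
    · have hdg : ∀ l, (Δ + M * Matrix.diagonal (fun l => (lam l : ℂ) * d l) * M) l l = d l := by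
        intro l
        simp only [Matrix.add_apply]
        rw [hdiagMDM d l]
        exact (hdeq l).symm
      simp only [h𝓛]
      have : (fun l => (lam l : ℂ) * (Δ + M * Matrix.diagonal (fun l => (lam l : ℂ) * d l) * M) l l)
          = fun l => (lam l : ℂ) * d l := by
        funext l; rw [hdg l]
      rw [this]
      abel
  · intro R Δ _ hRΔ
    rw [← hRΔ]
    exact key2 R
end

section
/- Fix n ≥ 1, Γ ∈ Sym_L(ℝ), z ∈ ℂ with Im z > 0, and a complex nL×nL matrix A with operator norm at most 1. Let V := B^{1/2}. For an L-tuple W = (W^{(1)},…,W^{(L)}) of real symmetric n×n matrices, define the nL×nL matrix H₁(W) := (V⊗I_n)·BlockDiag(√(λ_1/n)·W^{(1)},…,√(λ_L/n)·W^{(L)})·(V⊗I_n) − (VΛV)⊗I_n, and Φ(W) := (1/n)·tr(A·(H₁(W) + Γ⊗I_n − z·I_{nL})^{-1}) (the inverse exists since H₁(W) + Γ⊗I_n is real symmetric and Im z > 0). Then for any two such tuples W, W̄: |Φ(W) − Φ(W̄)| ≤ (‖V‖²·√(L·max_l λ_l) / (n·(Im z)²)) · Σ_{l=1}^L ‖W^{(l)}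 − W̄^{(l)}‖_F, where ‖V‖ is the operator norm of V and ‖·‖_F is the Frobenius norm. -/
open Matrix
open scoped Kronecker

/-- The ℓ²→ℓ² operator norm of a real square matrix. -/
noncomputable def opNormR {m : Type*} [Fintype m] [DecidableEq m] (A : Matrix m m ℝ) : ℝ :=
  ‖Matrix.toEuclideanCLM (𝕜 := ℝ) A‖

/-- The ℓ²→ℓ² operator norm of a complex square matrix. -/
noncomputable def opNormC {m : Type*} [Fintype m] [DecidableEq m] (A : Matrix m m ℂ) : ℝ :=
  ‖Matrix.toEuclideanCLM (𝕜 := ℂ) A‖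

/-- The Frobenius norm of a real square matrix. -/
noncomputable def frobNorm {m : Type*} [Fintype m] (A : Matrix m m ℝ) : ℝ :=
  Real.sqrt (∑ i, ∑ j, (A i j) ^ 2)

/-- The `nL × nL` block-diagonal matrix with `n × n` diagonal blocks `W 0, …, W (L-1)`,
indexed compatibly with the Kronecker product `V ⊗ I_n`. -/
def blockDiagL {L n : ℕ} (W : Fin L → Matrix (Fin n) (Fin n) ℝ) :
    Matrix (Fin L × Fin n) (Fin L × Fin n) ℝ :=
  fun p q => if p.1 = q.1 then W p.1 p.2 q.2 else 0

/-- `H₁(W) := (V ⊗ I_n) · BlockDiag(√(λ_l/n)·W^{(l)}) · (V ⊗ I_n) − (VΛV) ⊗ I_n`. -/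
noncomputable def H1mat {L n : ℕ} (lam : Fin L → ℝ) (V : Matrix (Fin L) (Fin L) ℝ)
    (W : Fin L → Matrix (Fin n) (Fin n) ℝ) :
    Matrix (Fin L × Fin n) (Fin L × Fin n) ℝ :=
  (V ⊗ₖ (1 : Matrix (Fin n) (Fin n) ℝ)) *
      blockDiagL (fun l => Real.sqrt (lam l / n) • W l) *
      (V ⊗ₖ (1 : Matrix (Fin n) (Fin n) ℝ))
    - (V * Matrix.diagonal lam * V) ⊗ₖ (1 : Matrix (Fin n) (Fin n) ℝ)

/-- `Φ(W) := (1/n)·tr(A·(H₁(W) + Γ⊗I_n − z I_{nL})⁻¹)`. -/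
noncomputable def PhiFun {L n : ℕ} (lam : Fin L → ℝ) (V Γ : Matrix (Fin L) (Fin L) ℝ)
    (z : ℂ) (A : Matrix (Fin L × Fin n) (Fin L × Fin n) ℂ)
    (W : Fin L → Matrix (Fin n) (Fin n) ℝ) : ℂ :=
  (1 / (n : ℂ)) *
    Matrix.trace (A *
      ((H1mat lam V W + Γ ⊗ₖ (1 : Matrix (Fin n) (Fin n) ℝ)).map (fun x : ℝ => (x : ℂ))
          - z • (1 : Matrix (Fin L × Fin n) (Fin L × Fin n) ℂ))⁻¹)

/-- The square root of a positive semidefinite matrix, as `Matrix.PosSemidef.sqrt` was defined in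
the older Mathlib (since removed there). -/
noncomputable def Matrix.PosSemidef.sqrt {n : Type*} [Fintype n] [DecidableEq n] {𝕜 : Type*} [RCLike 𝕜]
    [PartialOrder 𝕜] [StarOrderedRing 𝕜]
    {A : Matrix n n 𝕜} (hA : A.PosSemidef) : Matrix n n 𝕜 :=
  hA.1.eigenvectorUnitary.1 * diagonal ((↑) ∘ (√·) ∘ hA.1.eigenvalues) *
    (star hA.1.eigenvectorUnitary : Matrix n n 𝕜)

/-!
By the resolvent identity `R - R' = R (H' - H) R'` and cyclicity of the trace,
`Φ(W) - Φ(W̄) = (1/n) tr(R' A R · (H₁(W̄) - H₁(W)))`. Cauchy–Schwarz for the trace bounds this by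
the product of the Frobenius norms of the two factors. The first is at most `√(nL)` times its
operator norm, and resolvents of Hermitian matrices have operator norm at most `1 / Im z`. The
second is `(V ⊗ I) Δ (V ⊗ I)` with `Δ` block diagonal with blocks `√(λ_l/n) (W^{(l)} - W̄^{(l)})`,
so its Frobenius norm is at most `‖V‖² √(max λ / n) Σ_l ‖W^{(l)} - W̄^{(l)}‖_F`.
-/

open scoped Matrix.Norms.L2Operator

section Frobenius

variable {𝕜 : Type*} [RCLike 𝕜] {l m n : Type*} [Fintype l] [Fintype m] [Fintype n]

/-- Defined by hand rather than through `Matrix.frobeniusNormedAddCommGroup`, so that it can be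
used next to the L2 operator norm instance. -/
noncomputable def frobeniusNorm (X : Matrix m n 𝕜) : ℝ :=
  √(∑ i, ∑ j, ‖X i j‖ ^ 2)

lemma frobeniusNorm_nonneg (X : Matrix m n 𝕜) : 0 ≤ frobeniusNorm X :=
  Real.sqrt_nonneg _

lemma frobeniusNorm_sq (X : Matrix m n 𝕜) :
    frobeniusNorm X ^ 2 = ∑ i, ∑ j, ‖X i j‖ ^ 2 :=
  Real.sq_sqrt (by positivity)

lemma frobeniusNorm_sq_eq_sum_col (X : Matrix m n 𝕜) :
    frobeniusNorm X ^ 2 = ∑ j, ‖WithLp.toLp 2 (Xᵀ j)‖ ^ 2 := by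
  simp only [frobeniusNorm_sq, EuclideanSpace.norm_sq_eq, transpose_apply]
  exact Finset.sum_comm

lemma frobeniusNorm_conjTranspose (X : Matrix m n 𝕜) : frobeniusNorm Xᴴ = frobeniusNorm X := by
  simp only [frobeniusNorm, conjTranspose_apply, norm_star]
  rw [Finset.sum_comm]

lemma frobeniusNorm_sub_comm (X Y : Matrix m n 𝕜) :
    frobeniusNorm (X - Y) = frobeniusNorm (Y - X) := by
  simp only [frobeniusNorm, Matrix.sub_apply, norm_sub_rev]

lemma frobeniusNorm_smul (c : 𝕜) (X : Matrix m n 𝕜) :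
    frobeniusNorm (c • X) = ‖c‖ * frobeniusNorm X := by
  simp only [frobeniusNorm, Matrix.smul_apply, smul_eq_mul, norm_mul, mul_pow, ← Finset.mul_sum]
  rw [Real.sqrt_mul (by positivity), Real.sqrt_sq (norm_nonneg c)]

lemma frobeniusNorm_map_ofReal (X : Matrix m n ℝ) :
    frobeniusNorm (X.map (fun x : ℝ => (x : ℂ))) = frobeniusNorm X := by
  simp [frobeniusNorm]

lemma frobNorm_eq_frobeniusNorm (X : Matrix m m ℝ) : frobNorm X = frobeniusNorm X := by
  simp [frobNorm, frobeniusNorm]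

lemma norm_eq_frobeniusNorm_curry (x : EuclideanSpace 𝕜 (m × n)) :
    ‖x‖ = frobeniusNorm (Matrix.of fun b i => x (b, i)) := by
  rw [EuclideanSpace.norm_eq, frobeniusNorm, Fintype.sum_prod_type]
  rfl

lemma frobeniusNorm_mul_le_norm_mul [DecidableEq m] (P : Matrix l m 𝕜) (N : Matrix m n 𝕜) :
    frobeniusNorm (P * N) ≤ ‖P‖ * frobeniusNorm N := by
  refine le_of_sq_le_sq ?_ (mul_nonneg (norm_nonneg _) (frobeniusNorm_nonneg _))
  rw [mul_pow, frobeniusNorm_sq_eq_sum_col, frobeniusNorm_sq_eq_sum_col, Finset.mul_sum]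
  refine Finset.sum_le_sum fun j _ => ?_
  have hcol : WithLp.toLp 2 ((P * N)ᵀ j) = (EuclideanSpace.equiv l 𝕜).symm (P *ᵥ Nᵀ j) := by
    ext i
    simp [mulVec, dotProduct, mul_apply]
  rw [← mul_pow, hcol]
  gcongr
  exact P.l2_opNorm_mulVec (WithLp.toLp 2 (Nᵀ j))

lemma frobeniusNorm_mul_le_mul_norm [DecidableEq m] [DecidableEq n] (N : Matrix l m 𝕜)
    (P : Matrix m n 𝕜) : frobeniusNorm (N * P) ≤ frobeniusNorm N * ‖P‖ := by
  rw [← frobeniusNorm_conjTranspose, conjTranspose_mul, ← frobeniusNorm_conjTranspose N, mul_comm,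
    ← l2_opNorm_conjTranspose P]
  exact frobeniusNorm_mul_le_norm_mul _ _

lemma frobeniusNorm_le_sqrt_card_mul_norm [DecidableEq n] (X : Matrix m n 𝕜) :
    frobeniusNorm X ≤ √(Fintype.card n) * ‖X‖ := by
  refine le_of_sq_le_sq ?_ (by positivity)
  rw [mul_pow, Real.sq_sqrt (Nat.cast_nonneg _), frobeniusNorm_sq_eq_sum_col]
  calc ∑ j, ‖WithLp.toLp 2 (Xᵀ j)‖ ^ 2 ≤ ∑ _j : n, ‖X‖ ^ 2 := by
        refine Finset.sum_le_sum fun j _ => ?_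
        have hcol : WithLp.toLp 2 (Xᵀ j) =
            (EuclideanSpace.equiv m 𝕜).symm (X *ᵥ EuclideanSpace.single j 1) := by
          ext i
          simp [mulVec_single]
        have h := X.l2_opNorm_mulVec (EuclideanSpace.single j 1)
        rw [PiLp.norm_single, norm_one, mul_one] at h
        rw [hcol]
        gcongr
    _ = Fintype.card n * ‖X‖ ^ 2 := by simp

lemma norm_trace_mul_le (X : Matrix m n 𝕜) (Y : Matrix n m 𝕜) :
    ‖(X * Y).trace‖ ≤ frobeniusNorm X * frobeniusNorm Y := by
  rw [← frobeniusNorm_conjTranspose Y]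
  calc ‖(X * Y).trace‖ = ‖∑ i, ∑ j, X i j * Y j i‖ := by simp [trace, mul_apply]
    _ ≤ ∑ i, ∑ j, ‖X i j‖ * ‖Yᴴ i j‖ := by
        refine (norm_sum_le _ _).trans (Finset.sum_le_sum fun i _ => ?_)
        refine (norm_sum_le _ _).trans (le_of_eq (Finset.sum_congr rfl fun j _ => ?_))
        simp
    _ ≤ frobeniusNorm X * frobeniusNorm Yᴴ := by
        simp only [frobeniusNorm, ← Fintype.sum_prod_type']
        exact Real.sum_mul_le_sqrt_mul_sqrt _ _ _

/-- Applied to a vector `x`, `M ⊗ I` acts as `M` on the matrix whose columns are the blocks of `x`. -/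
lemma l2_opNorm_kronecker_one_le [DecidableEq m] [DecidableEq n] (M : Matrix m m 𝕜) :
    ‖M ⊗ₖ (1 : Matrix n n 𝕜)‖ ≤ ‖M‖ := by
  refine ContinuousLinearMap.opNorm_le_bound _ (norm_nonneg _) fun x => ?_
  rw [norm_eq_frobeniusNorm_curry, norm_eq_frobeniusNorm_curry]
  convert frobeniusNorm_mul_le_norm_mul M (Matrix.of fun b i => x (b, i)) using 2
  ext b i
  simp [mulVec, dotProduct, mul_apply, Fintype.sum_prod_type, one_apply]

end Frobenius

section Resolvent

variable {m : Type*} [Fintype m] [DecidableEq m] {H : Matrix m m ℂ}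

lemma abs_im_le_norm_ofReal_sub (r : ℝ) (z : ℂ) : |z.im| ≤ ‖(r : ℂ) - z‖ := by
  simpa using Complex.abs_im_le_norm ((r : ℂ) - z)

lemma Matrix.IsHermitian.sub_smul_one_eq (hH : H.IsHermitian) (z : ℂ) :
    H - z • 1 = (hH.eigenvectorUnitary : Matrix m m ℂ) *
      diagonal (fun i => (hH.eigenvalues i : ℂ) - z) *
        star (hH.eigenvectorUnitary : Matrix m m ℂ) := by
  set U := (hH.eigenvectorUnitary : Matrix m m ℂ)
  have hU : U * star U = 1 := Unitary.mul_star_self_of_mem hH.eigenvectorUnitary.2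
  calc H - z • 1
      = U * diagonal (RCLike.ofReal ∘ hH.eigenvalues) * star U - U * (z • 1) * star U := by
        rw [Matrix.mul_smul, Matrix.mul_one, Matrix.smul_mul, hU]
        conv_lhs => rw [hH.spectral_theorem, Unitary.conjStarAlgAut_apply]
    _ = U * (diagonal (RCLike.ofReal ∘ hH.eigenvalues) - z • 1) * star U := by
        rw [Matrix.mul_sub, Matrix.sub_mul]
    _ = _ := by
        rw [smul_one_eq_diagonal, diagonal_sub]
        rfl

lemma Matrix.IsHermitian.sub_smul_one_mul_eq_one (hH : H.IsHermitian) {z : ℂ} (hz : z.im ≠ 0) :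
    (H - z • 1) * ((hH.eigenvectorUnitary : Matrix m m ℂ) *
      diagonal (fun i => ((hH.eigenvalues i : ℂ) - z)⁻¹) *
        star (hH.eigenvectorUnitary : Matrix m m ℂ)) = 1 := by
  set U := hH.eigenvectorUnitary
  have hd : diagonal (fun i => (hH.eigenvalues i : ℂ) - z) *
      diagonal (fun i => ((hH.eigenvalues i : ℂ) - z)⁻¹) = 1 := by
    rw [diagonal_mul_diagonal, ← diagonal_one]
    congr 1
    funext i
    refine mul_inv_cancel₀ fun h => hz (abs_nonpos_iff.mp ?_)
    simpa [h] using abs_im_le_norm_ofReal_sub (hH.eigenvalues i) z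
  rw [hH.sub_smul_one_eq]
  calc _ = (U : Matrix m m ℂ) * (diagonal (fun i => (hH.eigenvalues i : ℂ) - z) *
        (star (U : Matrix m m ℂ) * U) * diagonal (fun i => ((hH.eigenvalues i : ℂ) - z)⁻¹)) *
          star (U : Matrix m m ℂ) := by
        simp only [Matrix.mul_assoc]
        rfl
    _ = 1 := by
        rw [Unitary.star_mul_self_of_mem U.2, Matrix.mul_one, hd, Matrix.mul_one,
          Unitary.mul_star_self_of_mem U.2]

lemma Matrix.IsHermitian.isUnit_sub_smul_one (hH : H.IsHermitian) {z : ℂ} (hz : z.im ≠ 0) :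
    IsUnit (H - z • 1) :=
  (isUnit_iff_isUnit_det _).2 (isUnit_det_of_right_inverse (hH.sub_smul_one_mul_eq_one hz))

lemma Matrix.IsHermitian.norm_inv_sub_smul_one_le (hH : H.IsHermitian) {z : ℂ} (hz : z.im ≠ 0) :
    ‖(H - z • 1)⁻¹‖ ≤ |z.im|⁻¹ := by
  set U := hH.eigenvectorUnitary
  rw [inv_eq_right_inv (hH.sub_smul_one_mul_eq_one hz),
    CStarRing.norm_mul_mem_unitary _ (Unitary.star_mem U.2),
    CStarRing.norm_mem_unitary_mul _ U.2, l2_opNorm_diagonal]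
  refine (pi_norm_le_iff_of_nonneg (by positivity)).2 fun i => ?_
  rw [norm_inv]
  exact inv_anti₀ (abs_pos.2 hz) (abs_im_le_norm_ofReal_sub _ z)

lemma norm_trace_mul_inv_sub_le {H' : Matrix m m ℂ} (hH : H.IsHermitian)
    (hH' : H'.IsHermitian) (A : Matrix m m ℂ) {z : ℂ} (hz : z.im ≠ 0) :
    ‖(A * (H - z • 1)⁻¹).trace - (A * (H' - z • 1)⁻¹).trace‖ ≤
      √(Fintype.card m) * ‖A‖ / z.im ^ 2 * frobeniusNorm (H - H') := by
  set R := (H - z • 1)⁻¹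
  set R' := (H' - z • 1)⁻¹
  have hdiff : (A * R).trace - (A * R').trace = (R' * A * R * (H' - H)).trace := by
    rw [← trace_sub, ← Matrix.mul_sub,
      inv_sub_inv (iff_of_true (hH.isUnit_sub_smul_one hz) (hH'.isUnit_sub_smul_one hz)),
      sub_sub_sub_cancel_right, ← Matrix.mul_assoc, trace_mul_comm]
    simp only [Matrix.mul_assoc]
    rfl
  have hX : ‖R' * A * R‖ ≤ ‖A‖ / z.im ^ 2 :=
    calc ‖R' * A * R‖ ≤ |z.im|⁻¹ * ‖A‖ * |z.im|⁻¹ := by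
          refine (norm_mul_le _ _).trans ?_
          gcongr
          · exact (norm_mul_le _ _).trans (by gcongr; exact hH'.norm_inv_sub_smul_one_le hz)
          · exact hH.norm_inv_sub_smul_one_le hz
      _ = ‖A‖ / z.im ^ 2 := by rw [← sq_abs z.im]; ring
  rw [hdiff, frobeniusNorm_sub_comm H]
  calc _ ≤ frobeniusNorm (R' * A * R) * frobeniusNorm (H' - H) := norm_trace_mul_le _ _
    _ ≤ √(Fintype.card m) * (‖A‖ / z.im ^ 2) * frobeniusNorm (H' - H) := by
        gcongr
        · exact frobeniusNorm_nonneg _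
        · exact (frobeniusNorm_le_sqrt_card_mul_norm _).trans (by gcongr)
    _ = _ := by ring

end Resolvent

lemma Matrix.PosSemidef.isHermitian_sqrt {m : Type*} [Fintype m] [DecidableEq m]
    {B : Matrix m m ℝ} (hB : B.PosSemidef) : hB.sqrt.IsHermitian :=
  isHermitian_mul_mul_conjTranspose _ (isHermitian_diagonal _)

lemma Matrix.IsHermitian.kronecker {R l m : Type*} [CommSemiring R] [StarRing R]
    {M : Matrix l l R} {N : Matrix m m R}
    (hM : M.IsHermitian) (hN : N.IsHermitian) : (M ⊗ₖ N).IsHermitian :=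
  (conjTranspose_kronecker M N).trans (by rw [hM.eq, hN.eq])

section H1mat

variable {L n : ℕ}

lemma blockDiagL_isHermitian {f : Fin L → Matrix (Fin n) (Fin n) ℝ}
    (hf : ∀ l, (f l).IsHermitian) : (blockDiagL f).IsHermitian := by
  ext ⟨a, i⟩ ⟨b, j⟩
  by_cases h : a = b
  · subst h
    simpa [blockDiagL] using congrFun (congrFun (hf a) i) j
  · simp [blockDiagL, h, Ne.symm h]

lemma blockDiagL_sub (f g : Fin L → Matrix (Fin n) (Fin n) ℝ) :
    blockDiagL (fun l => f l - g l) = blockDiagL f - blockDiagL g := by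
  ext ⟨a, i⟩ ⟨b, j⟩
  by_cases h : a = b <;> simp [blockDiagL, h]

lemma frobeniusNorm_blockDiagL_le (f : Fin L → Matrix (Fin n) (Fin n) ℝ) :
    frobeniusNorm (blockDiagL f) ≤ ∑ l, frobeniusNorm (f l) := by
  refine le_of_sq_le_sq ?_ (Finset.sum_nonneg fun l _ => frobeniusNorm_nonneg _)
  have hsq : frobeniusNorm (blockDiagL f) ^ 2 = ∑ l, frobeniusNorm (f l) ^ 2 := by
    simp [frobeniusNorm_sq, Fintype.sum_prod_type, blockDiagL, apply_ite,
      Finset.sum_comm (γ := Fin L)]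
  rw [hsq]
  exact Finset.sum_sq_le_sq_sum_of_nonneg fun l _ => frobeniusNorm_nonneg _

lemma H1mat_isHermitian (lam : Fin L → ℝ) {V : Matrix (Fin L) (Fin L) ℝ} (hV : V.IsHermitian)
    {W : Fin L → Matrix (Fin n) (Fin n) ℝ} (hW : ∀ l, (W l).IsHermitian) :
    (H1mat lam V W).IsHermitian := by
  have hP := hV.kronecker (isHermitian_one (n := Fin n))
  have hΔ := blockDiagL_isHermitian fun l => (hW l).smul (IsSelfAdjoint.all √(lam l / n))
  refine IsHermitian.sub ?_ (IsHermitian.kronecker ?_ isHermitian_one)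
  · have h := isHermitian_mul_mul_conjTranspose (V ⊗ₖ (1 : Matrix (Fin n) (Fin n) ℝ)) hΔ
    rwa [hP.eq] at h
  · have h := isHermitian_mul_mul_conjTranspose V (isHermitian_diagonal lam)
    rwa [hV.eq] at h

lemma H1mat_sub_H1mat (lam : Fin L → ℝ) (V : Matrix (Fin L) (Fin L) ℝ)
    (W W' : Fin L → Matrix (Fin n) (Fin n) ℝ) :
    H1mat lam V W - H1mat lam V W' =
      (V ⊗ₖ (1 : Matrix (Fin n) (Fin n) ℝ)) * blockDiagL (fun l => √(lam l / n) • (W l - W' l)) *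
        (V ⊗ₖ (1 : Matrix (Fin n) (Fin n) ℝ)) := by
  simp only [H1mat, smul_sub, blockDiagL_sub, Matrix.mul_sub, Matrix.sub_mul]
  abel

lemma frobeniusNorm_H1mat_sub_le {lam : Fin L → ℝ} {c : ℝ} (hc : ∀ l, lam l ≤ c)
    (V : Matrix (Fin L) (Fin L) ℝ) (W W' : Fin L → Matrix (Fin n) (Fin n) ℝ) :
    frobeniusNorm (H1mat lam V W - H1mat lam V W') ≤
      ‖V‖ ^ 2 * √(c / n) * ∑ l, frobNorm (W l - W' l) := by
  set P := V ⊗ₖ (1 : Matrix (Fin n) (Fin n) ℝ)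
  set Δ := blockDiagL (fun l => √(lam l / n) • (W l - W' l))
  have hP : ‖P‖ ≤ ‖V‖ := l2_opNorm_kronecker_one_le V
  have hΔ : frobeniusNorm Δ ≤ √(c / n) * ∑ l, frobNorm (W l - W' l) := by
    refine (frobeniusNorm_blockDiagL_le _).trans ?_
    rw [Finset.mul_sum]
    refine Finset.sum_le_sum fun l _ => ?_
    rw [frobeniusNorm_smul, frobNorm_eq_frobeniusNorm, Real.norm_eq_abs,
      abs_of_nonneg (Real.sqrt_nonneg _)]
    exact mul_le_mul_of_nonneg_right (Real.sqrt_le_sqrt (by gcongr; exact hc l))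
      (frobeniusNorm_nonneg _)
  rw [H1mat_sub_H1mat]
  calc frobeniusNorm (P * Δ * P) ≤ ‖P‖ * frobeniusNorm Δ * ‖P‖ := by
        rw [Matrix.mul_assoc, mul_assoc]
        exact (frobeniusNorm_mul_le_norm_mul _ _).trans
          (by gcongr; exact frobeniusNorm_mul_le_mul_norm _ _)
    _ ≤ ‖V‖ * (√(c / n) * ∑ l, frobNorm (W l - W' l)) * ‖V‖ := by
        have := (frobeniusNorm_nonneg Δ).trans hΔ
        gcongr
        exact frobeniusNorm_nonneg Δ
    _ = _ := by ring

end H1mat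

theorem stmt18_general {L n : ℕ} (hL : 0 < L) (hn : 0 < n)
    (lam : Fin L → ℝ)
    (B : Matrix (Fin L) (Fin L) ℝ) (hB : B.PosDef)
    (V : Matrix (Fin L) (Fin L) ℝ) (hV : V = hB.posSemidef.sqrt)
    (Γ : Matrix (Fin L) (Fin L) ℝ) (hΓ : Γᵀ = Γ)
    (z : ℂ) (hz : 0 < z.im)
    (A : Matrix (Fin L × Fin n) (Fin L × Fin n) ℂ) (hA : opNormC A ≤ 1)
    (W W' : Fin L → Matrix (Fin n) (Fin n) ℝ)
    (hW : ∀ l, (W l)ᵀ = W l) (hW' : ∀ l, (W' l)ᵀ = W' l) :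
    ‖PhiFun lam V Γ z A W - PhiFun lam V Γ z A W'‖
      ≤ opNormR V ^ 2 *
          Real.sqrt (L * Finset.univ.sup' ⟨⟨0, hL⟩, Finset.mem_univ _⟩ lam)
          / (n * z.im ^ 2) *
        ∑ l, frobNorm (W l - W' l) := by
  set mx := Finset.univ.sup' ⟨⟨0, hL⟩, Finset.mem_univ _⟩ lam
  have hVh : V.IsHermitian := hV ▸ hB.posSemidef.isHermitian_sqrt
  have hM : ∀ W : Fin L → Matrix (Fin n) (Fin n) ℝ, (∀ l, (W l)ᵀ = W l) →
      ((H1mat lam V W + Γ ⊗ₖ (1 : Matrix (Fin n) (Fin n) ℝ)).map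
        (fun x : ℝ => (x : ℂ))).IsHermitian := fun W hW =>
    ((H1mat_isHermitian lam hVh hW).add (IsHermitian.kronecker hΓ isHermitian_one)).map _
      fun x => (Complex.conj_ofReal x).symm
  have htr := norm_trace_mul_inv_sub_le (hM W hW) (hM W' hW') A hz.ne'
  rw [← Matrix.map_sub _ Complex.ofReal_sub, add_sub_add_right_eq_sub, frobeniusNorm_map_ofReal,
    Fintype.card_prod, Fintype.card_fin, Fintype.card_fin] at htr
  have hH1 := frobeniusNorm_H1mat_sub_le (lam := lam) (c := mx)
    (fun l => Finset.le_sup' lam (Finset.mem_univ l)) V W W'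
  calc ‖PhiFun lam V Γ z A W - PhiFun lam V Γ z A W'‖
      = 1 / n * ‖(A * _).trace - (A * _).trace‖ := by
        rw [PhiFun, PhiFun, ← mul_sub, norm_mul, norm_div, norm_one, Complex.norm_natCast]
    _ ≤ 1 / n * (√(L * n : ℕ) * 1 / z.im ^ 2 *
          (‖V‖ ^ 2 * √(mx / n) * ∑ l, frobNorm (W l - W' l))) := by
        gcongr
        exact htr.trans
          (mul_le_mul (by gcongr; exact hA) hH1 (frobeniusNorm_nonneg _) (by positivity))
    _ = opNormR V ^ 2 * √(L * mx) / (n * z.im ^ 2) * ∑ l, frobNorm (W l - W' l) := by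
        have hn' : (n : ℝ) ≠ 0 := by positivity
        have hsqrt : √(L * n : ℕ) * √(mx / n) = √(L * mx) := by
          rw [← Real.sqrt_mul (by positivity)]
          congr 1
          push_cast
          field_simp
        rw [opNormR, ← cstar_norm_def, ← hsqrt]
        field_simp

/-- Lipschitz bound for the tested resolvent trace
`|Φ(W) − Φ(W̄)| ≤ (‖V‖²·√(L·max_l λ_l) / (n·(Im z)²)) · Σ_l ‖W^{(l)} − W̄^{(l)}‖_F`. -/
theorem stmt18 {L n : ℕ} (hL : 0 < L) (hn : 0 < n)
    (lam : Fin L → ℝ) (hlam : ∀ l, 0 < lam l)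
    (B : Matrix (Fin L) (Fin L) ℝ) (hB : B.PosDef) (hBdiag : ∀ l, B l l = 1)
    (V : Matrix (Fin L) (Fin L) ℝ) (hV : V = hB.posSemidef.sqrt)
    (Γ : Matrix (Fin L) (Fin L) ℝ) (hΓ : Γᵀ = Γ)
    (z : ℂ) (hz : 0 < z.im)
    (A : Matrix (Fin L × Fin n) (Fin L × Fin n) ℂ) (hA : opNormC A ≤ 1)
    (W W' : Fin L → Matrix (Fin n) (Fin n) ℝ)
    (hW : ∀ l, (W l)ᵀ = W l) (hW' : ∀ l, (W' l)ᵀ = W' l) :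
    ‖PhiFun lam V Γ z A W - PhiFun lam V Γ z A W'‖
      ≤ opNormR V ^ 2 *
          Real.sqrt (L * Finset.univ.sup' ⟨⟨0, hL⟩, Finset.mem_univ _⟩ lam)
          / (n * z.im ^ 2) *
        ∑ l, frobNorm (W l - W' l) :=
  stmt18_general hL hn lam B hB V hV Γ hΓ z hz A hA W W' hW hW'
end
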